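/- arXiv:2502.10751 — 7 statements merged into one kernel-verified Lean document; each statement's English description precedes it below -/
import Mathlib

section
/- Let c : ℕ → ℂ be a sequence and let r ≥ 2 be an integer. If A_{s,r}(c) = 0 for every s ≥ 0 and A_{0,r−1}(c) = 0, then A_{s,r−1}(c) = 0 for every s ≥ 0. -/
/-!
Write `A_s = A_{s,r-1}` and `B_s = A_{s,r}`. Applying the Desnanot–Jacobi identity to the
Hankel matrix `H_{s,r}` (its corner cofactors and its central minor are again Hankel
determinants) gives the condensation identity `A_s A_{s+2} - A_{s+1}^2 = B_s A_{s+2,r-2}`.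
Since every `B_s` vanishes, `A_s = 0` forces `A_{s+1}^2 = 0`, and induction from `A_0 = 0`
finishes the proof.

Desnanot–Jacobi is the case `|I| = 2` of Jacobi's complementary minor theorem
`det (adj A)_{I,I} = (det A)^(|I|-1) det A_{Iᶜ,Iᶜ}`, proved by multiplying `A` with the matrix
obtained from `adj A` by replacing its columns outside `I` with unit vectors, and cancelling
`det A` in the generic case.
-/

/-- The Hankel matrix `H_{s,m}(c)`: the `(m+1) × (m+1)` complex matrix whose `(i,j)` entry
is `c (s + i + j)`. Its determinant is `A_{s,m}(c)`. -/
noncomputable def hankelDet (c : ℕ → ℂ) (s m : ℕ) : ℂ :=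
  (Matrix.of fun i j : Fin (m + 1) => c (s + (i : ℕ) + (j : ℕ))).det

namespace Matrix

variable {m n R : Type*} [Fintype m] [Fintype n] [DecidableEq m] [DecidableEq n] [CommRing R]

theorem det_mul_det_toBlocks₁₁_adjugate (A : Matrix (m ⊕ n) (m ⊕ n) R) :
    A.det * A.adjugate.toBlocks₁₁.det = A.det ^ Fintype.card m * A.toBlocks₂₂.det := by
  set P := A.toBlocks₁₁; set Q := A.toBlocks₁₂; set S := A.toBlocks₂₁; set T := A.toBlocks₂₂
  set X := A.adjugate.toBlocks₁₁; set Z := A.adjugate.toBlocks₂₁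
  have hA : A = fromBlocks P Q S T := (fromBlocks_toBlocks A).symm
  obtain ⟨hPX, -, hSX, -⟩ : P * X + Q * Z = A.det • 1 ∧ _ ∧ S * X + T * Z = 0 ∧ _ := by
    have h := A.mul_adjugate
    rw [← fromBlocks_toBlocks A.adjugate] at h
    nth_rewrite 1 [hA] at h
    rw [fromBlocks_multiply, ← fromBlocks_one, fromBlocks_smul, smul_zero, smul_zero] at h
    exact fromBlocks_inj.mp h
  calc A.det * X.det = (A * fromBlocks X 0 Z 1).det := by
        rw [det_mul, det_fromBlocks_zero₁₂, det_one, mul_one]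
    _ = (fromBlocks (A.det • (1 : Matrix m m R)) Q 0 T).det := by
        rw [hA, fromBlocks_multiply, ← hA, hPX, hSX]
        simp
    _ = A.det ^ Fintype.card m * T.det := by
        rw [det_fromBlocks_zero₂₁, det_smul, det_one, mul_one]

theorem det_toBlocks₁₁_adjugate [Nonempty m] (A : Matrix (m ⊕ n) (m ⊕ n) R) :
    A.adjugate.toBlocks₁₁.det = A.det ^ (Fintype.card m - 1) * A.toBlocks₂₂.det := by
  let A' := mvPolynomialX (m ⊕ n) (m ⊕ n) ℤ
  suffices A'.adjugate.toBlocks₁₁.det = A'.det ^ (Fintype.card m - 1) * A'.toBlocks₂₂.det by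
    let f := MvPolynomial.aeval (R := ℤ) fun p : (m ⊕ n) × (m ⊕ n) => A p.1 p.2
    have hf₁₁ : f.mapMatrix A'.adjugate.toBlocks₁₁ = (f.mapMatrix A'.adjugate).toBlocks₁₁ := rfl
    have hf₂₂ : f.mapMatrix A'.toBlocks₂₂ = (f.mapMatrix A').toBlocks₂₂ := rfl
    have := congrArg f this
    rwa [map_mul, map_pow, AlgHom.map_det, AlgHom.map_det, AlgHom.map_det, hf₁₁, hf₂₂,
      AlgHom.map_adjugate, mvPolynomialX_mapMatrix_aeval] at this
  apply mul_left_cancel₀ (det_mvPolynomialX_ne_zero (m ⊕ n) ℤ)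
  rw [det_mul_det_toBlocks₁₁_adjugate, ← mul_assoc, ← pow_succ',
    Nat.sub_add_cancel Fintype.card_pos]

end Matrix

open Matrix

/-- `inl 0 ↦ last`, `inl 1 ↦ 0`, `inr i ↦ i + 1`. -/
def finCornersEquiv (n : ℕ) : Fin 2 ⊕ Fin n ≃ Fin (n + 2) :=
  (Equiv.sumComm _ _).trans (finSumFinEquiv.trans (finRotate _))

theorem desnanot_jacobi {R : Type*} [CommRing R] {n : ℕ}
    (A : Matrix (Fin (n + 2)) (Fin (n + 2)) R) :
    A.adjugate 0 0 * A.adjugate (Fin.last _) (Fin.last _)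
      - A.adjugate 0 (Fin.last _) * A.adjugate (Fin.last _) 0
      = A.det * (A.submatrix (fun i : Fin n => i.castSucc.succ) fun i => i.castSucc.succ).det := by
  have e0 : finCornersEquiv n (.inl 0) = Fin.last (n + 1) := by
    ext; simp [finCornersEquiv, Fin.val_add]
  have e1 : finCornersEquiv n (.inl 1) = 0 := by
    ext; simp [finCornersEquiv, Fin.val_add]
  have e2 (i : Fin n) : finCornersEquiv n (.inr i) = i.castSucc.succ := by
    ext; simp [finCornersEquiv, Fin.val_add]
  have h := det_toBlocks₁₁_adjugate (A.submatrix (finCornersEquiv n) (finCornersEquiv n))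
  rw [adjugate_submatrix_equiv_self, det_submatrix_equiv_self, det_fin_two] at h
  simp only [toBlocks₁₁, toBlocks₂₂, of_apply, submatrix_apply, e0, e1, e2, Fintype.card_fin,
    Nat.add_one_sub_one, pow_one] at h
  rw [mul_comm (A.adjugate 0 0), mul_comm (A.adjugate 0 _)]
  exact h

theorem det_submatrix_hankel (c : ℕ → ℂ) {s t k m : ℕ} {f g : Fin (k + 1) → Fin (m + 1)}
    (h : ∀ i j, s + f i + g j = t + i + j) :
    ((Matrix.of fun i j : Fin (m + 1) => c (s + i + j)).submatrix f g).det = hankelDet c t k := by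
  unfold hankelDet
  simp only [submatrix, of_apply, h]

theorem hankelDet_condensation (c : ℕ → ℂ) (s m : ℕ) :
    hankelDet c s (m + 1) * hankelDet c (s + 2) (m + 1) - hankelDet c (s + 1) (m + 1) ^ 2
      = hankelDet c s (m + 2) * hankelDet c (s + 2) m := by
  set A := Matrix.of fun i j : Fin (m + 3) => c (s + i + j)
  have hA : A.det = hankelDet c s (m + 2) := rfl
  have hsign : ((-1 : ℂ) ^ (m + 2)) ^ 2 = 1 := by rw [← pow_mul, pow_mul', neg_one_sq, one_pow]
  have h := desnanot_jacobi A
  simp only [adjugate_fin_succ_eq_det_submatrix, Fin.succAbove_zero, Fin.succAbove_last,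
    Fin.val_zero, Fin.val_last, add_zero, zero_add] at h
  rw [det_submatrix_hankel c (t := s + 2) fun _ _ => by simp only [Fin.val_succ]; omega,
    det_submatrix_hankel c (t := s) fun _ _ => by simp only [Fin.val_castSucc],
    det_submatrix_hankel c (t := s + 1) fun _ _ => by
      simp only [Fin.val_succ, Fin.val_castSucc]; omega,
    det_submatrix_hankel c (t := s + 1) fun _ _ => by
      simp only [Fin.val_succ, Fin.val_castSucc]; omega,
    det_submatrix_hankel c (t := s + 2) fun _ _ => by
      simp only [Fin.val_succ, Fin.val_castSucc]; omega, hA] at h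
  linear_combination h + (hankelDet c (s + 1) (m + 1) ^ 2
    - hankelDet c s (m + 1) * hankelDet c (s + 2) (m + 1)) * hsign

/-- If `A_{s,r}(c) = 0` for every `s ≥ 0` and `A_{0,r−1}(c) = 0`, then
`A_{s,r−1}(c) = 0` for every `s ≥ 0` (here `r ≥ 2`). -/
theorem hankel_det_step_down (c : ℕ → ℂ) (r : ℕ) (hr : 2 ≤ r)
    (h1 : ∀ s : ℕ, hankelDet c s r = 0) (h2 : hankelDet c 0 (r - 1) = 0) :
    ∀ s : ℕ, hankelDet c s (r - 1) = 0 := by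
  obtain ⟨m, rfl⟩ : ∃ m, r = m + 2 := ⟨r - 2, by omega⟩
  rw [show m + 2 - 1 = m + 1 from rfl] at h2 ⊢
  intro s
  induction s with
  | zero => exact h2
  | succ s ih =>
    have h := hankelDet_condensation c s m
    rw [h1 s, ih, zero_mul, zero_mul, zero_sub, neg_eq_zero] at h
    exact pow_eq_zero_iff two_ne_zero |>.mp h
end

section
/- Let c : ℕ → ℂ be a sequence and r ≥ 1 an integer. Suppose that A_{s,r}(c) = 0 for every s ≥ 0 and that A_{0,r−1}(c) ≠ 0. Then there exist complex numbers b_0, …, b_r with b_r ≠ 0 such that ∑_{j=0}^{r} b_j·c_{s+j} = 0 for every s ≥ 0. -/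
/-!
Write `v ⋆ c` (`shiftComb v c`) for `s ↦ ∑ⱼ vⱼ c(s + j)`; then `v` lies in the kernel of
`H_{s,n}(c)` exactly when `v ⋆ c` vanishes at `s, …, s + n`, and the operators `v ⋆ ·` and
`w ⋆ ·` commute. We prove, by induction on `r`, that `A_{s,r}(c) = 0` for all `s ≥ σ` already
gives a recurrence with `b_r ≠ 0` valid from `σ` on.

While `A_{u,r-1}(c) ≠ 0`, a kernel vector of `H_{u,r}(c)` has nonzero last entry and is unique
up to scaling, so a kernel vector at `σ` is also one at `σ + 1, σ + 2, …`. Once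
`A_{t,r-1}(c) = 0`, pairing kernel vectors of `H_{t,r}(c)` and `H_{t,r-1}(c)` shows
`A_{t+1,r-1}(c) = 0`, so the induction hypothesis gives a shorter recurrence `b'` from `t` on.
As `b' ⋆ (w ⋆ c) = w ⋆ (b' ⋆ c) = 0`, the sequence `w ⋆ c`, which vanishes on a window of length
`r`, vanishes from `t` on.
-/

open Matrix

section ShiftComb

variable {R : Type*}

def shiftComb [CommSemiring R] {n : ℕ} (v : Fin n → R) (c : ℕ → R) (s : ℕ) : R :=
  ∑ j, v j * c (s + j)

theorem shiftComb_comm [CommSemiring R] {m n : ℕ} (v : Fin m → R) (w : Fin n → R)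
    (c : ℕ → R) : shiftComb v (shiftComb w c) = shiftComb w (shiftComb v c) := by
  funext s
  simp only [shiftComb, Finset.mul_sum]
  rw [Finset.sum_comm]
  refine Finset.sum_congr rfl fun j _ => Finset.sum_congr rfl fun i _ => ?_
  rw [add_right_comm s (i : ℕ)]
  ring

theorem shiftComb_eq_init_add [CommSemiring R] {n : ℕ} (v : Fin (n + 1) → R) (c : ℕ → R)
    (s : ℕ) : shiftComb v c s = shiftComb (Fin.init v) c s + v (Fin.last n) * c (s + n) := by
  simp [shiftComb, Fin.sum_univ_castSucc, Fin.init]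

theorem shiftComb_cons_zero [CommSemiring R] {n : ℕ} (v : Fin n → R) (c : ℕ → R) (s : ℕ) :
    shiftComb (Fin.cons 0 v : Fin (n + 1) → R) c s = shiftComb v c (s + 1) := by
  simp [shiftComb, Fin.sum_univ_succ, add_assoc, add_comm 1]

theorem shiftComb_sub [CommRing R] {n : ℕ} (v w : Fin n → R) (c : ℕ → R) (s : ℕ) :
    shiftComb (v - w) c s = shiftComb v c s - shiftComb w c s := by
  simp [shiftComb, sub_mul, Finset.sum_sub_distrib]

theorem shiftComb_smul [CommSemiring R] {n : ℕ} (k : R) (v : Fin n → R) (c : ℕ → R) (s : ℕ) :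
    shiftComb (k • v) c s = k * shiftComb v c s := by
  simp [shiftComb, Finset.mul_sum, mul_assoc]

theorem shiftComb_eq_zero [CommSemiring R] {n : ℕ} (v : Fin n → R) {c : ℕ → R} {s : ℕ}
    (hc : ∀ j < n, c (s + j) = 0) : shiftComb v c s = 0 :=
  Finset.sum_eq_zero fun j _ => by rw [hc j j.isLt, mul_zero]

theorem eq_zero_of_recurrence [CommSemiring R] [NoZeroDivisors R] {n t : ℕ}
    {b : Fin (n + 1) → R} {d : ℕ → R} (hb : b (Fin.last n) ≠ 0)
    (hrec : ∀ s, t ≤ s → shiftComb b d s = 0) (hinit : ∀ k < n, d (t + k) = 0) :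
    ∀ s, t ≤ s → d s = 0 := by
  suffices h : ∀ k, d (t + k) = 0 by
    intro s hs
    simpa [Nat.add_sub_cancel' hs] using h (s - t)
  intro k
  induction k using Nat.strong_induction_on with
  | _ k ih =>
    rcases lt_or_ge k n with hk | hk
    · exact hinit k hk
    · have hprev : ∀ j < n, d (t + (k - n) + j) = 0 := fun j hj => by
        rw [add_assoc]; exact ih _ (by omega)
      have h := hrec (t + (k - n)) (by omega)
      rw [shiftComb_eq_init_add, shiftComb_eq_zero _ hprev, zero_add,
        show t + (k - n) + n = t + k by omega] at h
      exact (mul_eq_zero.1 h).resolve_left hb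

theorem shiftComb_eq_zero_of_recurrence [CommSemiring R] [NoZeroDivisors R] {m n t : ℕ}
    {b : Fin (n + 1) → R} {w : Fin m → R} {c : ℕ → R} (hb : b (Fin.last n) ≠ 0)
    (hbc : ∀ s, t ≤ s → shiftComb b c s = 0) (hw : ∀ k < n, shiftComb w c (t + k) = 0) :
    ∀ s, t ≤ s → shiftComb w c s = 0 := by
  refine eq_zero_of_recurrence hb (fun s hs => ?_) hw
  rw [shiftComb_comm]
  exact shiftComb_eq_zero w fun j _ => hbc (s + j) (by omega)

end ShiftComb

theorem Fin.eq_zero_of_init_eq_zero {M : Type*} [Zero M] {n : ℕ} {v : Fin (n + 1) → M}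
    (hinit : Fin.init v = 0) (hlast : v (Fin.last n) = 0) : v = 0 := by
  funext j
  exact Fin.lastCases hlast (congrFun hinit) j

section Hankel

variable {c : ℕ → ℂ} {s m : ℕ}

theorem hankel_mulVec (c : ℕ → ℂ) (s n : ℕ) (v : Fin (n + 1) → ℂ) :
    (Matrix.of fun i j : Fin (n + 1) => c (s + i + j)) *ᵥ v =
      fun i : Fin (n + 1) => shiftComb v c (s + i) := by
  funext i
  simp only [mulVec, dotProduct, of_apply, shiftComb]
  exact Finset.sum_congr rfl fun j _ => mul_comm _ (v j)

theorem hankelDet_eq_zero_iff :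
    hankelDet c s m = 0 ↔ ∃ v : Fin (m + 1) → ℂ, v ≠ 0 ∧ ∀ i ≤ m, shiftComb v c (s + i) = 0 := by
  simp only [hankelDet, ← exists_mulVec_eq_zero_iff, hankel_mulVec, funext_iff, Pi.zero_apply,
    Fin.forall_iff, Nat.lt_succ_iff]

theorem eq_zero_of_hankelDet_ne_zero (hA : hankelDet c s m ≠ 0) {v : Fin (m + 2) → ℂ}
    (hlast : v (Fin.last (m + 1)) = 0) (hv : ∀ i ≤ m, shiftComb v c (s + i) = 0) : v = 0 := by
  refine Fin.eq_zero_of_init_eq_zero ?_ hlast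
  by_contra hne
  refine hA (hankelDet_eq_zero_iff.2 ⟨Fin.init v, hne, fun i hi => ?_⟩)
  simpa [shiftComb_eq_init_add, hlast] using hv i hi

theorem exists_last_ne_zero_of_hankelDet (h0 : hankelDet c s (m + 1) = 0)
    (h1 : hankelDet c s m ≠ 0) : ∃ w : Fin (m + 2) → ℂ, w (Fin.last (m + 1)) ≠ 0 ∧
      ∀ i ≤ m + 1, shiftComb w c (s + i) = 0 := by
  obtain ⟨w, hw0, hw⟩ := hankelDet_eq_zero_iff.1 h0
  refine ⟨w, fun hlast => hw0 ?_, hw⟩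
  exact eq_zero_of_hankelDet_ne_zero h1 hlast fun i hi => hw i (by omega)

/-- The kernel of `H_{s,m+1}(c)` is a line off the hyperplane `{v_last = 0}`, and vanishing of
`e ⋆ c` at `s, …, s + m` already puts `e` on it. -/
theorem shiftComb_eq_zero_of_window (h0 : hankelDet c s (m + 1) = 0) (h1 : hankelDet c s m ≠ 0)
    {e : Fin (m + 2) → ℂ} (he : ∀ i ≤ m, shiftComb e c (s + i) = 0) :
    shiftComb e c (s + (m + 1)) = 0 := by
  obtain ⟨w, hwlast, hw⟩ := exists_last_ne_zero_of_hankelDet h0 h1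
  set k := e (Fin.last (m + 1)) / w (Fin.last (m + 1))
  have hek : e - k • w = 0 := eq_zero_of_hankelDet_ne_zero h1 (by simp [k, hwlast])
    fun i hi => by rw [shiftComb_sub, shiftComb_smul, he i hi, hw i (by omega), mul_zero, sub_zero]
  rw [sub_eq_zero.1 hek, shiftComb_smul, hw _ le_rfl, mul_zero]

theorem shiftComb_eq_zero_of_forall_hankelDet {σ T : ℕ} {e : Fin (m + 2) → ℂ}
    (h0 : ∀ k < T, hankelDet c (σ + k) (m + 1) = 0) (h1 : ∀ k < T, hankelDet c (σ + k) m ≠ 0)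
    (he : ∀ i ≤ m, shiftComb e c (σ + i) = 0) : ∀ i ≤ T + m, shiftComb e c (σ + i) = 0 := by
  induction T with
  | zero => simpa using he
  | succ T ih =>
    have ih := ih (fun k hk => h0 k (by omega)) (fun k hk => h1 k (by omega))
    intro i hi
    rcases (by omega : i ≤ T + m ∨ i = T + (m + 1)) with hi | rfl
    · exact ih i hi
    · have := shiftComb_eq_zero_of_window (h0 T (by omega)) (h1 T (by omega))
        fun j hj => by rw [add_assoc]; exact ih _ (by omega)
      rwa [add_assoc] at this

theorem hankelDet_succ_eq_zero (h0 : hankelDet c s (m + 1) = 0) (h1 : hankelDet c s m = 0) :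
    hankelDet c (s + 1) m = 0 := by
  obtain ⟨w, hw0, hw⟩ := hankelDet_eq_zero_iff.1 h0
  obtain ⟨u, hu0, hu⟩ := hankelDet_eq_zero_iff.1 h1
  rw [hankelDet_eq_zero_iff]
  by_cases hlast : w (Fin.last (m + 1)) = 0
  · refine ⟨Fin.init w, fun h => hw0 (Fin.eq_zero_of_init_eq_zero h hlast), fun i hi => ?_⟩
    have := hw (i + 1) (by omega)
    rwa [shiftComb_eq_init_add, hlast, zero_mul, add_zero, ← add_assoc, add_right_comm s i] at this
  · refine ⟨u, hu0, fun i hi => ?_⟩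
    rcases (by omega : i < m ∨ i = m) with hi | rfl
    · rw [add_assoc, add_comm 1]
      exact hu (i + 1) (by omega)
    · -- pair the two kernel vectors: `w ⋆ (u ⋆ c) = u ⋆ (w ⋆ c)`
      have hpair := congrFun (shiftComb_comm w u c) s
      rw [shiftComb_eq_init_add w, shiftComb_eq_zero _ fun j hj => hu j (by omega), zero_add,
        shiftComb_eq_zero u fun j hj => hw j (by omega)] at hpair
      rw [add_assoc, add_comm 1]
      exact (mul_eq_zero.1 hpair).resolve_left hlast

theorem hankelDet_eq_zero_of_ge {t : ℕ} (h : ∀ s, t ≤ s → hankelDet c s (m + 1) = 0)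
    (ht : hankelDet c t m = 0) : ∀ s, t ≤ s → hankelDet c s m = 0 := by
  intro s hs
  induction s, hs using Nat.le_induction with
  | base => exact ht
  | succ s hs ih => exact hankelDet_succ_eq_zero (h s hs) ih

end Hankel

theorem exists_shiftComb_eq_zero_of_hankelDet_eq_zero {c : ℕ → ℂ} {m σ : ℕ}
    (h : ∀ s, σ ≤ s → hankelDet c s m = 0) :
    ∃ b : Fin (m + 1) → ℂ, b (Fin.last m) ≠ 0 ∧ ∀ s, σ ≤ s → shiftComb b c s = 0 := by
  induction m generalizing σ with
  | zero =>
    refine ⟨fun _ => 1, one_ne_zero, fun s hs => ?_⟩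
    simpa [shiftComb, hankelDet] using h s hs
  | succ m ih =>
    by_cases hσ : hankelDet c σ m = 0
    · obtain ⟨b, hb, hbc⟩ := ih (hankelDet_eq_zero_of_ge h hσ)
      refine ⟨Fin.cons 0 b, by simpa [← Fin.succ_last] using hb, fun s hs => ?_⟩
      rw [shiftComb_cons_zero]
      exact hbc _ (by omega)
    obtain ⟨w, hwlast, hw⟩ := exists_last_ne_zero_of_hankelDet (h σ le_rfl) hσ
    have hwin {T : ℕ} (hT : ∀ k < T, hankelDet c (σ + k) m ≠ 0) :=
      shiftComb_eq_zero_of_forall_hankelDet (fun k _ => h _ (by omega)) hT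
        fun i hi => hw i (by omega)
    refine ⟨w, hwlast, fun s hs => ?_⟩
    by_cases hdeg : ∃ t, σ ≤ t ∧ hankelDet c t m = 0
    · classical
      obtain ⟨t, ⟨hσt, ht⟩, ht_min⟩ : ∃ t, (σ ≤ t ∧ hankelDet c t m = 0) ∧
          ∀ t' < t, ¬(σ ≤ t' ∧ hankelDet c t' m = 0) :=
        ⟨Nat.find hdeg, Nat.find_spec hdeg, fun _ => Nat.find_min hdeg⟩
      have hwin_t := hwin (T := t - σ) fun k hk h' => ht_min _ (by omega) ⟨by omega, h'⟩
      obtain ⟨b, hb, hbc⟩ := ih (hankelDet_eq_zero_of_ge (fun s hs => h s (by omega)) ht)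
      rcases lt_or_ge s t with hst | hts
      · simpa [Nat.add_sub_cancel' hs] using hwin_t (s - σ) (by omega)
      · refine shiftComb_eq_zero_of_recurrence hb hbc (fun k hk => ?_) s hts
        simpa [show σ + (t - σ + k) = t + k by omega] using hwin_t (t - σ + k) (by omega)
    · simp only [not_exists, not_and] at hdeg
      simpa [Nat.add_sub_cancel' hs] using
        hwin (T := s - σ) (fun k _ => hdeg _ (by omega)) (s - σ) (by omega)

theorem hankel_linear_recurrence_general (c : ℕ → ℂ) (r : ℕ)
    (h1 : ∀ s : ℕ, hankelDet c s r = 0) :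
    ∃ b : Fin (r + 1) → ℂ, b (Fin.last r) ≠ 0 ∧
      ∀ s : ℕ, ∑ j : Fin (r + 1), b j * c (s + (j : ℕ)) = 0 := by
  obtain ⟨b, hb, hbc⟩ := exists_shiftComb_eq_zero_of_hankelDet_eq_zero (σ := 0) fun s _ => h1 s
  exact ⟨b, hb, fun s => hbc s s.zero_le⟩

/-- If `A_{s,r}(c) = 0` for every `s` and `A_{0,r−1}(c) ≠ 0` (with `r ≥ 1`), then there are
complex numbers `b 0, …, b r` with `b r ≠ 0` such that `∑_{j=0}^{r} b j · c (s+j) = 0`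
for every `s`. -/
theorem hankel_linear_recurrence (c : ℕ → ℂ) (r : ℕ) (hr : 1 ≤ r)
    (h1 : ∀ s : ℕ, hankelDet c s r = 0) (h2 : hankelDet c 0 (r - 1) ≠ 0) :
    ∃ b : Fin (r + 1) → ℂ, b (Fin.last r) ≠ 0 ∧
      ∀ s : ℕ, ∑ j : Fin (r + 1), b j * c (s + (j : ℕ)) = 0 :=
  hankel_linear_recurrence_general c r h1
end

section
/- Let c : ℕ → ℂ be a sequence and k ≥ 1 an integer such that A_{s,k}(c) = 0 for every s ≥ 0. Then there exist polynomials P, Q ∈ ℂ[X] with Q ≠ 0, deg Q ≤ k, and (P = 0 or deg P ≤ k − 1), such that Q·F_c = P in the ring of formal power series ℂ[[X]]. -/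
open Polynomial Finset
open scoped Matrix PowerSeries

section Hankel

variable {K : Type*} [Field K]

def momentFunctional (c : ℕ → K) : K[X] →ₗ[K] K :=
  lsum fun n => c n • LinearMap.id

def hankel (c : ℕ → K) (s m : ℕ) : Matrix (Fin (m + 1)) (Fin (m + 1)) K :=
  Matrix.of fun i j => c (s + i + j)

/-- `v` is the polynomial `∑ vᵢ Xⁱ` of a null vector of `hankel c s m`. -/
def IsHankelNull (c : ℕ → K) (s m : ℕ) (v : K[X]) : Prop :=
  v.natDegree ≤ m ∧ ∀ i ≤ m, momentFunctional c (X ^ (s + i) * v) = 0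

def HankelRegular (c : ℕ → K) (s m : ℕ) : Prop :=
  ∀ v, IsHankelNull c s m v → v = 0

variable {c : ℕ → K}

@[simp]
lemma momentFunctional_monomial (n : ℕ) (a : K) :
    momentFunctional c (monomial n a) = a * c n := by
  simp [momentFunctional, sum_monomial_index, mul_comm]

lemma momentFunctional_X_pow_mul {m : ℕ} (s : ℕ) {p : K[X]} (hp : p.natDegree ≤ m) :
    momentFunctional c (X ^ s * p) = ∑ j ∈ range (m + 1), p.coeff j * c (s + j) := by
  conv_lhs => rw [p.as_sum_range' (m + 1) (by omega)]
  simp [mul_sum, X_pow_mul_monomial, add_comm]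

lemma momentFunctional_shift (p : K[X]) :
    momentFunctional (fun n => c (n + 1)) p = momentFunctional c (X * p) := by
  induction p using Polynomial.induction_on' with
  | add p q hp hq => simp [hp, hq, mul_add]
  | monomial n a => simp [X_mul_monomial]

lemma momentFunctional_X_pow_mul_sub_C_mul (n : ℕ) (p q : K[X]) (a : K) :
    momentFunctional c (X ^ n * (p - C a * q)) =
      momentFunctional c (X ^ n * p) - a * momentFunctional c (X ^ n * q) := by
  rw [mul_sub, mul_left_comm, ← smul_eq_C_mul, map_sub, map_smul, smul_eq_mul]

lemma momentFunctional_X_pow_mul_mul_eq_zero {n t : ℕ} {p q : K[X]} (hp : p.natDegree ≤ n)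
    (hq : ∀ i ≤ n, momentFunctional c (X ^ (t + i) * q) = 0) :
    momentFunctional c (X ^ t * (p * q)) = 0 := by
  rw [p.as_sum_range_C_mul_X_pow' (n := n + 1) (by omega), sum_mul, mul_sum, map_sum]
  refine sum_eq_zero fun i hi => ?_
  rw [show X ^ t * (C (p.coeff i) * X ^ i * q) = p.coeff i • (X ^ (t + i) * q) by
    rw [smul_eq_C_mul, pow_add]; ring, map_smul, hq i (Nat.lt_succ_iff.mp (mem_range.mp hi)), smul_zero]

lemma hankel_mulVec_coeff {s m : ℕ} {u : K[X]} (hu : u.natDegree ≤ m) (i : Fin (m + 1)) :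
    (hankel c s m *ᵥ fun j => u.coeff j) i = momentFunctional c (X ^ (s + i) * u) := by
  rw [momentFunctional_X_pow_mul _ hu,
    ← Fin.sum_univ_eq_sum_range (fun j => u.coeff j * c (s + i + j))]
  simp [hankel, Matrix.mulVec, dotProduct, mul_comm]

lemma hankelRegular_iff_det_ne_zero {s m : ℕ} :
    HankelRegular c s m ↔ (hankel c s m).det ≠ 0 := by
  rw [Ne, ← Matrix.exists_mulVec_eq_zero_iff, not_exists]
  constructor
  · rintro hreg v ⟨hv0, hv⟩
    set u : K[X] := ↑((degreeLTEquiv K (m + 1)).symm v)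
    have hu : u.natDegree ≤ m := natDegree_le_iff_degree_le.mpr
      (Order.le_of_lt_succ (mem_degreeLT.mp ((degreeLTEquiv K (m + 1)).symm v).2))
    have hcoeff : (fun j : Fin (m + 1) => u.coeff j) = v :=
      (degreeLTEquiv K (m + 1)).apply_symm_apply v
    refine hv0 (hcoeff ▸ ?_)
    rw [hreg u ⟨hu, fun i hi => ?_⟩]
    · rfl
    · rw [← hankel_mulVec_coeff hu ⟨i, by omega⟩, hcoeff, hv, Pi.zero_apply]
  · rintro h u ⟨hu, hrows⟩
    have hcoeff : (fun j : Fin (m + 1) => u.coeff j) = 0 := by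
      by_contra hne
      exact h _ ⟨hne, funext fun i => by rw [hankel_mulVec_coeff hu]; exact hrows i (by omega)⟩
    ext n
    by_cases hn : n ≤ m
    · exact congrFun hcoeff ⟨n, by omega⟩
    · exact coeff_eq_zero_of_natDegree_lt (by omega)

lemma exists_isHankelNull_of_not_hankelRegular {s m : ℕ} (h : ¬ HankelRegular c s m) :
    ∃ v, v ≠ 0 ∧ IsHankelNull c s m v := by
  simpa [HankelRegular, and_comm] using h

lemma hankelRegular_shift {s m : ℕ} :
    HankelRegular (fun n => c (n + 1)) s m ↔ HankelRegular c (s + 1) m := by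
  simp only [HankelRegular, IsHankelNull, momentFunctional_shift, ← mul_assoc, ← pow_succ',
    add_right_comm s 1]

lemma coeff_succ_ne_zero_of_hankelRegular {s m : ℕ} {v : K[X]} (hreg : HankelRegular c s m)
    (hv0 : v ≠ 0) (hv : v.natDegree ≤ m + 1)
    (hrows : ∀ i ≤ m, momentFunctional c (X ^ (s + i) * v) = 0) : v.coeff (m + 1) ≠ 0 :=
  fun h => hv0 (hreg v ⟨by simpa using natDegree_le_pred hv h, hrows⟩)

section NullVectorOfSingular

variable {s m : ℕ} {v : K[X]}

lemma coeff_zero_ne_zero_of_hankelRegular_succ (hmid : HankelRegular c (s + 1) m)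
    (hv : IsHankelNull c s (m + 1) v) (hv0 : v ≠ 0) : v.coeff 0 ≠ 0 := by
  intro h
  have hX : X * divX v = v := by simpa [h] using X_mul_divX_add v
  refine hv0 (hX ▸ ?_)
  have hdeg : (divX v).natDegree ≤ m := by
    rw [natDegree_divX_eq_natDegree_tsub_one]; have := hv.1; omega
  rw [hmid (divX v) ⟨hdeg, fun i hi => ?_⟩, mul_zero]
  rw [show s + 1 + i = s + i + 1 by omega, pow_succ, mul_assoc, hX]
  exact hv.2 i (by omega)

lemma coeff_succ_ne_zero_of_hankelRegular_succ (hmid : HankelRegular c (s + 1) m)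
    (hv : IsHankelNull c s (m + 1) v) (hv0 : v ≠ 0) : v.coeff (m + 1) ≠ 0 :=
  coeff_succ_ne_zero_of_hankelRegular hmid hv0 hv.1 fun i hi => by
    rw [show s + 1 + i = s + (i + 1) by omega]
    exact hv.2 (i + 1) (by omega)

/-- For a null vector `u` of `H_{s,m}`, `(u - a v) / X` is one of `H_{s+1,m}` once the constant
terms cancel. -/
lemma hankelRegular_of_hankelRegular_succ (hmid : HankelRegular c (s + 1) m)
    (hv : IsHankelNull c s (m + 1) v) (hv0 : v ≠ 0) : HankelRegular c s m := by
  rintro u ⟨hu, hrows⟩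
  set a := u.coeff 0 / v.coeff 0
  have hX : X * divX (u - C a * v) = u - C a * v := by
    simpa [a, div_mul_cancel₀ _ (coeff_zero_ne_zero_of_hankelRegular_succ hmid hv hv0)]
      using X_mul_divX_add (u - C a * v)
  have hdeg : (u - C a * v).natDegree ≤ m + 1 :=
    (natDegree_sub_le _ _).trans (max_le (by omega) ((natDegree_C_mul_le _ _).trans hv.1))
  have hb : divX (u - C a * v) = 0 := by
    refine hmid _ ⟨by rw [natDegree_divX_eq_natDegree_tsub_one]; omega, fun i hi => ?_⟩
    rw [show s + 1 + i = s + i + 1 by omega, pow_succ, mul_assoc, hX,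
      momentFunctional_X_pow_mul_sub_C_mul, hrows i hi, hv.2 i (by omega), mul_zero, sub_zero]
  have hu_eq : u = C a * v := by rwa [hb, mul_zero, eq_comm, sub_eq_zero] at hX
  have ha : a = 0 := by
    have := congrArg (coeff · (m + 1)) hu_eq
    simp only [coeff_C_mul, coeff_eq_zero_of_natDegree_lt (Nat.lt_succ_of_le hu)] at this
    exact (mul_eq_zero.mp this.symm).resolve_right
      (coeff_succ_ne_zero_of_hankelRegular_succ hmid hv hv0)
  rw [hu_eq, ha, C_0, zero_mul]

/-- For a null vector `u` of `H_{s+2,m}`, `X u - a v` is one of `H_{s+1,m}` once the top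
coefficients cancel. -/
lemma hankelRegular_add_two_of_hankelRegular_succ (hmid : HankelRegular c (s + 1) m)
    (hv : IsHankelNull c s (m + 1) v) (hv0 : v ≠ 0) : HankelRegular c (s + 2) m := by
  rintro u ⟨hu, hrows⟩
  set a := u.coeff m / v.coeff (m + 1)
  have htop : (X * u - C a * v).coeff (m + 1) = 0 := by
    simp [a, coeff_X_mul,
      div_mul_cancel₀ _ (coeff_succ_ne_zero_of_hankelRegular_succ hmid hv hv0)]
  have hdeg : (X * u - C a * v).natDegree ≤ m + 1 :=
    (natDegree_sub_le _ _).trans (max_le (natDegree_mul_le.trans (by rw [natDegree_X]; omega))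
      ((natDegree_C_mul_le _ _).trans hv.1))
  have hb : X * u - C a * v = 0 := by
    refine hmid _ ⟨by simpa using natDegree_le_pred hdeg htop, fun i hi => ?_⟩
    rw [momentFunctional_X_pow_mul_sub_C_mul, ← mul_assoc, ← pow_succ,
      show s + 1 + i + 1 = s + 2 + i by omega, hrows i hi,
      show s + 1 + i = s + (i + 1) by omega, hv.2 (i + 1) (by omega), mul_zero, sub_zero]
  have hXu : X * u = C a * v := sub_eq_zero.mp hb
  have ha : a = 0 := by
    have := congrArg (coeff · 0) hXu
    simp only [coeff_X_mul_zero, coeff_C_mul] at this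
    exact (mul_eq_zero.mp this.symm).resolve_right
      (coeff_zero_ne_zero_of_hankelRegular_succ hmid hv hv0)
  rw [ha, C_0, zero_mul, mul_eq_zero] at hXu
  exact hXu.resolve_left X_ne_zero

end NullVectorOfSingular

lemma forall_hankelRegular_of_forall_not_hankelRegular_succ {m t : ℕ}
    (hsing : ∀ s, ¬ HankelRegular c s (m + 1)) (ht : HankelRegular c (t + 1) m) :
    ∀ s, HankelRegular c s m := by
  have down : ∀ n, HankelRegular c (n + 1) m → HankelRegular c n m := fun n hn => by
    obtain ⟨v, hv0, hv⟩ := exists_isHankelNull_of_not_hankelRegular (hsing n)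
    exact hankelRegular_of_hankelRegular_succ hn hv hv0
  have up : ∀ n, HankelRegular c (n + 1) m → HankelRegular c (n + 2) m := fun n hn => by
    obtain ⟨v, hv0, hv⟩ := exists_isHankelNull_of_not_hankelRegular (hsing n)
    exact hankelRegular_add_two_of_hankelRegular_succ hn hv hv0
  intro s
  rcases le_total s (t + 1) with hs | hs
  · exact Nat.decreasingInduction (fun n _ hn => down n hn) ht hs
  · refine Nat.le_induction ht (fun n hn hreg => ?_) s hs
    obtain ⟨n, rfl⟩ : ∃ n', n = n' + 1 := ⟨n - 1, by omega⟩
    exact up n hreg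

lemma exists_annihilator_of_forall_hankelRegular {m : ℕ}
    (hsing : ∀ s, ¬ HankelRegular c s (m + 1)) (hreg : ∀ s, HankelRegular c s m) :
    ∃ q : K[X], q ≠ 0 ∧ q.natDegree ≤ m + 1 ∧
      ∀ s, momentFunctional c (X ^ s * q) = 0 := by
  obtain ⟨q, hq0, hq, hrows⟩ := exists_isHankelNull_of_not_hankelRegular (hsing 0)
  refine ⟨q, hq0, hq, fun s => ?_⟩
  induction s using Nat.strong_induction_on with
  | _ s ih =>
  by_cases hs : s ≤ m + 1
  · simpa using hrows s hs
  obtain ⟨t, rfl⟩ : ∃ t, s = t + (m + 1) := ⟨s - (m + 1), by omega⟩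
  obtain ⟨v, hv0, hv, hvrows⟩ := exists_isHankelNull_of_not_hankelRegular (hsing t)
  have htop := coeff_succ_ne_zero_of_hankelRegular (hreg t) hv0 hv fun i hi => hvrows i (by omega)
  set r := v - C (v.coeff (m + 1)) * X ^ (m + 1)
  have hr : r.natDegree ≤ m := by
    have hdeg : r.natDegree ≤ m + 1 :=
      (natDegree_sub_le _ _).trans (max_le hv (natDegree_C_mul_X_pow_le _ _))
    simpa using natDegree_le_pred hdeg (by simp [r])
  have hsplit :
      v.coeff (m + 1) • (X ^ (t + (m + 1)) * q) = X ^ t * (q * v) - X ^ t * (r * q) := by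
    rw [smul_eq_C_mul, pow_add]; ring
  have := congrArg (momentFunctional c) hsplit
  rw [map_smul, map_sub, momentFunctional_X_pow_mul_mul_eq_zero hq hvrows,
    momentFunctional_X_pow_mul_mul_eq_zero hr fun i hi => ih (t + i) (by omega), sub_zero,
    smul_eq_mul] at this
  exact (mul_eq_zero.mp this).resolve_left htop

theorem exists_annihilator_of_forall_not_hankelRegular {k : ℕ}
    (h : ∀ s, ¬ HankelRegular c s k) :
    ∃ q : K[X], q ≠ 0 ∧ q.natDegree ≤ k ∧ ∀ s, momentFunctional c (X ^ s * q) = 0 := by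
  induction k generalizing c with
  | zero =>
    refine ⟨1, one_ne_zero, natDegree_one.le, fun s => ?_⟩
    obtain ⟨u, hu0, hu, hrows⟩ := exists_isHankelNull_of_not_hankelRegular (h s)
    rw [eq_C_of_natDegree_le_zero hu] at hu0 hrows
    have hcs := hrows 0 le_rfl
    rw [add_zero, mul_comm, C_mul_X_pow_eq_monomial, momentFunctional_monomial] at hcs
    rw [mul_one, X_pow_eq_monomial, momentFunctional_monomial, one_mul]
    exact (mul_eq_zero.mp hcs).resolve_left (C_ne_zero.mp hu0)
  | succ m ih =>
    by_cases hshift : ∀ s, ¬ HankelRegular c (s + 1) m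
    · obtain ⟨q, hq0, hq, hann⟩ :=
        ih (c := fun n => c (n + 1)) fun s => hankelRegular_shift.not.mpr (hshift s)
      refine ⟨X * q, mul_ne_zero X_ne_zero hq0,
        natDegree_mul_le.trans (by rw [natDegree_X]; omega), fun s => ?_⟩
      rw [mul_left_comm, ← momentFunctional_shift, hann]
    · obtain ⟨t, ht⟩ := not_forall_not.mp hshift
      exact exists_annihilator_of_forall_hankelRegular h
        (forall_hankelRegular_of_forall_not_hankelRegular_succ h ht)

lemma coeff_reflect_mul_mk {k : ℕ} {q : K[X]} (hq : q.natDegree ≤ k) (s : ℕ) :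
    PowerSeries.coeff (s + k) ((q.reflect k : K⟦X⟧) * PowerSeries.mk c) =
      momentFunctional c (X ^ s * q) := by
  rw [momentFunctional_X_pow_mul s hq, PowerSeries.coeff_mul,
    Finset.Nat.sum_antidiagonal_eq_sum_range_succ fun i j =>
      PowerSeries.coeff i (q.reflect k : K⟦X⟧) * PowerSeries.coeff j (PowerSeries.mk c)]
  simp only [coeff_coe, PowerSeries.coeff_mk, coeff_reflect]
  rw [← sum_subset (range_subset_range.mpr (by omega : k + 1 ≤ s + k + 1)) fun i _ hi => ?_,
    ← sum_range_reflect]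
  · refine sum_congr rfl fun i hi => ?_
    have hi := mem_range.mp hi
    rw [revAt_le (by omega), show k - (k + 1 - 1 - i) = i by omega,
      show s + k - (k + 1 - 1 - i) = s + i by omega]
  · have hi : k < i := by simpa using hi
    rw [revAt_eq_self_of_lt hi, coeff_eq_zero_of_natDegree_lt (hq.trans_lt hi), zero_mul]

end Hankel

lemma PowerSeries.coe_trunc_of_coeff_eq_zero {R : Type*} [CommSemiring R] {f : R⟦X⟧} {n : ℕ}
    (h : ∀ i, n ≤ i → coeff i f = 0) : (trunc n f : R⟦X⟧) = f := by
  ext i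
  rw [Polynomial.coeff_coe, coeff_trunc]
  split_ifs with hi
  · rfl
  · exact (h i (by omega)).symm

lemma hankelDet_eq_det_hankel (c : ℕ → ℂ) (s m : ℕ) : hankelDet c s m = (hankel c s m).det :=
  rfl

theorem rational_of_hankel_vanishing_general (c : ℕ → ℂ) (k : ℕ)
    (h : ∀ s : ℕ, hankelDet c s k = 0) :
    ∃ P Q : Polynomial ℂ, Q ≠ 0 ∧ Q.natDegree ≤ k ∧ (P = 0 ∨ P.natDegree ≤ k - 1) ∧
      (Q : PowerSeries ℂ) * PowerSeries.mk c = (P : PowerSeries ℂ) := by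
  have hsing : ∀ s, ¬ HankelRegular c s k := fun s => by
    rw [hankelRegular_iff_det_ne_zero, ← hankelDet_eq_det_hankel, h s, not_not]
  obtain ⟨q, hq0, hq, hann⟩ := exists_annihilator_of_forall_not_hankelRegular hsing
  have hF := PowerSeries.coe_trunc_of_coeff_eq_zero (n := k)
    (f := (q.reflect k : ℂ⟦X⟧) * PowerSeries.mk c) fun i hi => by
      rw [← Nat.sub_add_cancel hi, coeff_reflect_mul_mk hq, hann]
  refine ⟨_, q.reflect k, reflect_eq_zero_iff.not.mpr hq0,
    natDegree_reflect_le.trans (max_le le_rfl hq), ?_, hF.symm⟩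
  cases k with
  | zero => exact Or.inl rfl
  | succ k => exact Or.inr (Nat.le_sub_one_of_lt (PowerSeries.natDegree_trunc_lt _ k))

/-- Kronecker's criterion, formal version: if all `(k+1)×(k+1)` Hankel determinants
`A_{s,k}(c)` vanish (`k ≥ 1`), then `F_c = ∑ c_s X^s` is a rational power series
`P/Q` with `deg Q ≤ k` and `deg P ≤ k − 1`. -/
theorem rational_of_hankel_vanishing (c : ℕ → ℂ) (k : ℕ) (hk : 1 ≤ k)
    (h : ∀ s : ℕ, hankelDet c s k = 0) :
    ∃ P Q : Polynomial ℂ, Q ≠ 0 ∧ Q.natDegree ≤ k ∧ (P = 0 ∨ P.natDegree ≤ k - 1) ∧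
      (Q : PowerSeries ℂ) * PowerSeries.mk c = (P : PowerSeries ℂ) :=
  rational_of_hankel_vanishing_general c k h
end

section
/- Let D ⊆ ℂ^m and G ⊆ ℂ^n be domains, let A ⊆ D be a nonempty open set, and let B ⊆ G be a closed ball. Set X := (A × G) ∪ (D × B). Let f : ℂ^m × ℂ^n → ℂ be a function such that: (a) for every a ∈ A, the function w ↦ f(a,w) is holomorphic on G; (b) for every b ∈ B there is a polynomial P_b ∈ ℂ[z_1,…,z_m] (possibly zero) with f(z,b) = P_b(z) for all z ∈ D. Then there exist an integer k ≥ 0 and holomorphic functions c_α : G → ℂ, one for each multi-index α ∈ ℕ^m with |α| ≤ k, such that f(z,w) = ∑_{|α| ≤ k} c_α(w)·z^α for every (z,w) ∈ X. -/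
/-!
For each `k`, a polynomial of total degree `≤ k` is a linear function of its values on a fixed
grid of `(k + 1)^m` points of `A` (Combinatorial Nullstellensatz). Applying this interpolation
operator to `w ↦ f(grid, w)` yields polynomials `Q_k(·, w)` with coefficients holomorphic on
`G`, and `Q_k(·, b) = f(·, b)` on `A` whenever `f(·, b)` has degree `≤ k`. By Baire's theorem a
single `K` works on an open piece of `B`; the identity theorem in `w` gives `f = Q_K` on `A × G`,
and for `b ∈ B` the polynomials `f(·, b)` and `Q_K(·, b)` agree on the open set `A`, hence
everywhere.
-/

open Set Filter Topology Finset MvPolynomial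

theorem exists_grid_subset_of_isOpen {σ : Type*} [Fintype σ] {U : Set (σ → ℂ)} (hU : IsOpen U)
    (hne : U.Nonempty) (k : ℕ) :
    ∃ x : σ → Fin (k + 1) → ℂ,
      (∀ i, Function.Injective (x i)) ∧ ∀ γ : σ → Fin (k + 1), (fun i => x i (γ i)) ∈ U := by
  obtain ⟨a, ha⟩ := hne
  obtain ⟨r, hr, hrU⟩ := Metric.isOpen_iff.1 hU a ha
  refine ⟨fun i j => a i + (r / (k + 1) * j : ℝ), fun i j j' h => ?_, fun γ => hrU ?_⟩
  · simpa [hr.ne', Nat.cast_add_one_ne_zero, Fin.val_inj] using h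
  · rw [Metric.mem_ball, dist_pi_lt_iff hr]
    intro i
    have hγ : ((γ i : ℕ) : ℝ) ≤ k := by exact_mod_cast Nat.lt_succ_iff.1 (γ i).2
    calc dist (a i + (r / (k + 1) * (γ i : ℕ) : ℝ)) (a i) = r / (k + 1) * (γ i : ℕ) := by
          rw [dist_self_add_left, Complex.norm_real, Real.norm_of_nonneg (by positivity)]
      _ ≤ r / (k + 1) * k := by gcongr
      _ < r := by rw [div_mul_eq_mul_div, div_lt_iff₀ (by positivity)]; linarith

namespace MvPolynomial

theorem exists_linearMap_leftInverse_eval_grid {K σ : Type*} [Field K] [Finite σ] {k : ℕ}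
    {V : Submodule K (MvPolynomial σ K)} (hV : ∀ P ∈ V, ∀ i, P.degreeOf i ≤ k)
    (x : σ → Fin (k + 1) → K) (hx : ∀ i, Function.Injective (x i)) :
    ∃ L : ((σ → Fin (k + 1)) → K) →ₗ[K] MvPolynomial σ K,
      (∀ v, L v ∈ V) ∧ ∀ P ∈ V, L (fun γ => eval (fun i => x i (γ i)) P) = P := by
  classical
  let ev : V →ₗ[K] (σ → Fin (k + 1)) → K :=
    LinearMap.pi fun γ => (aeval fun i => x i (γ i)).toLinearMap ∘ₗ V.subtype
  have hev : LinearMap.ker ev = ⊥ := by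
    refine LinearMap.ker_eq_bot'.2 fun P hP => Subtype.ext ?_
    refine eq_zero_of_eval_zero_at_prod_finset (P : MvPolynomial σ K) (fun i => univ.image (x i))
      (fun i => ?_) fun y hy => ?_
    · rw [card_image_of_injective _ (hx i), card_univ, Fintype.card_fin]
      exact Nat.lt_succ_of_le (hV P P.2 i)
    · choose γ hγ using fun i => mem_image.1 (hy i)
      have hy : y = fun i => x i (γ i) := _root_.funext fun i => (hγ i).2.symm
      simpa [ev, hy] using congrFun hP γ
  obtain ⟨g, hg⟩ := ev.exists_leftInverse_of_injective hev
  exact ⟨V.subtype ∘ₗ g, fun v => (g v).2,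
    fun P hP => congrArg Subtype.val (LinearMap.congr_fun hg ⟨P, hP⟩)⟩

theorem eval_eq_sum_filter_coeff {R σ : Type*} [CommSemiring R] [Fintype σ] [DecidableEq σ]
    {P : MvPolynomial σ R} {k : ℕ} (hP : P.totalDegree ≤ k) (z : σ → R) :
    eval z P = ∑ α ∈ univ.filter (fun α : σ → Fin (k + 1) => ∑ i, (α i : ℕ) ≤ k),
      coeff (Finsupp.equivFunOnFinite.symm fun i => (α i : ℕ)) P * ∏ i, z i ^ (α i : ℕ) := by
  set e : (σ → Fin (k + 1)) → σ →₀ ℕ := fun α => Finsupp.equivFunOnFinite.symm fun i => (α i : ℕ)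
  have he : Function.Injective e := fun α β h =>
    _root_.funext fun i => Fin.val_injective (by simpa [e] using DFunLike.congr_fun h i)
  have hsupp :
      P.support ⊆ (univ.filter fun α : σ → Fin (k + 1) => ∑ i, (α i : ℕ) ≤ k).image e := by
    intro d hd
    have hdk : ∀ i, d i ≤ k := fun i =>
      (monomial_le_degreeOf i hd).trans ((degreeOf_le_totalDegree P i).trans hP)
    refine mem_image.2
      ⟨fun i => ⟨d i, Nat.lt_succ_of_le (hdk i)⟩, mem_filter.2 ⟨mem_univ _, ?_⟩, ?_⟩
    · simpa [Finsupp.sum_fintype] using (le_totalDegree hd).trans hP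
    · ext i; simp [e]
  rw [eval_eq', sum_subset hsupp fun d _ hd => by rw [notMem_support_iff.1 hd, zero_mul],
    sum_image he.injOn]
  simp [e]

theorem eq_of_eqOn_of_isOpen {𝕜 σ : Type*} [RCLike 𝕜] [Fintype σ]
    {P Q : MvPolynomial σ 𝕜} {U : Set (σ → 𝕜)} (hU : IsOpen U) (hne : U.Nonempty)
    (h : EqOn (eval · P) (eval · Q) U) : P = Q := by
  obtain ⟨x, hx⟩ := hne
  exact MvPolynomial.funext fun z =>
    (AnalyticOnNhd.eval_mvPolynomial P).eqOn_of_preconnected_of_eventuallyEq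
      (AnalyticOnNhd.eval_mvPolynomial Q) isPreconnected_univ (mem_univ x)
      (eventually_of_mem (hU.mem_nhds hx) h) (mem_univ z)

end MvPolynomial

section IdentityTheorem

variable {E F : Type*} [NormedAddCommGroup E] [NormedSpace ℂ E]
  [NormedAddCommGroup F] [NormedSpace ℂ F] [CompleteSpace F] {f g : E → F} {U : Set E} {x : E}

theorem DifferentiableOn.eqOn_of_convex_of_eventuallyEq (hf : DifferentiableOn ℂ f U)
    (hg : DifferentiableOn ℂ g U) (hUo : IsOpen U) (hUc : Convex ℝ U) (hx : x ∈ U)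
    (hfg : f =ᶠ[𝓝 x] g) : EqOn f g U := by
  intro y hy
  set φ : ℂ → E := fun t => x + t • (y - x) with hφ
  have hφd : Differentiable ℂ φ := by fun_prop
  have hTo : IsOpen (φ ⁻¹' U) := hUo.preimage hφd.continuous
  have hTc : Convex ℝ (φ ⁻¹' U) :=
    (hUc.translate_preimage_right x).linear_preimage
      ((LinearMap.toSpanSingleton ℂ E (y - x)).restrictScalars ℝ)
  have hfφ := (hf.comp hφd.differentiableOn (mapsTo_preimage φ U)).analyticOnNhd hTo
  have hgφ := (hg.comp hφd.differentiableOn (mapsTo_preimage φ U)).analyticOnNhd hTo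
  have hφ0 : φ 0 = x := by simp [hφ]
  have hφ1 : φ 1 = y := by simp [hφ]
  have := hfφ.eqOn_of_preconnected_of_eventuallyEq hgφ hTc.isPreconnected
    (show φ 0 ∈ U by rwa [hφ0]) (hfg.comp_tendsto (hφ0 ▸ hφd.continuous.tendsto 0))
    (show φ 1 ∈ U by rwa [hφ1])
  simpa [hφ1] using this

theorem DifferentiableOn.eqOn_of_preconnected_of_eventuallyEq (hf : DifferentiableOn ℂ f U)
    (hg : DifferentiableOn ℂ g U) (hUo : IsOpen U) (hU : IsPreconnected U) (hx : x ∈ U)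
    (hfg : f =ᶠ[𝓝 x] g) : EqOn f g U := by
  suffices U ⊆ {y | f =ᶠ[𝓝 y] g} from fun y hy => (this hy).eq_of_nhds
  refine hU.subset_of_closure_inter_subset isOpen_setOfPred_eventually_nhds ⟨x, hx, hfg⟩ ?_
  rintro y ⟨hy, hyU⟩
  obtain ⟨r, hr, hrU⟩ := Metric.isOpen_iff.1 hUo y hyU
  obtain ⟨s, hs, hsfg⟩ := mem_closure_iff_nhds.1 hy _ (Metric.ball_mem_nhds y hr)
  exact eventually_of_mem (Metric.ball_mem_nhds y hr) <|
    (hf.mono hrU).eqOn_of_convex_of_eventuallyEq (hg.mono hrU) Metric.isOpen_ball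
      (convex_ball y r) hs hsfg

end IdentityTheorem

theorem IsOpen.exists_isOpen_subset_of_subset_iUnion {X ι : Type*} [TopologicalSpace X]
    [BaireSpace X] [Countable ι] {U : Set X} (hU : IsOpen U) (hne : U.Nonempty) {S : ι → Set X}
    (hS : ∀ k, IsClosed (Subtype.val ⁻¹' S k : Set U)) (hcover : U ⊆ ⋃ k, S k) :
    ∃ k, ∃ V, IsOpen V ∧ V.Nonempty ∧ V ⊆ U ∩ S k := by
  have := hU.baireSpace
  have : Nonempty U := hne.to_subtype
  obtain ⟨k, hk⟩ := nonempty_interior_of_iUnion_of_closed hS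
    (eq_univ_of_forall fun w => by simpa using hcover w.2)
  refine ⟨k, (↑) '' interior (Subtype.val ⁻¹' S k : Set U),
    hU.isOpenMap_subtype_val _ isOpen_interior, hk.image _, ?_⟩
  rintro _ ⟨v, hv, rfl⟩
  exact ⟨v.2, (interior_subset hv : v ∈ Subtype.val ⁻¹' S k)⟩

theorem exists_totalDegree_le_interpolant {σ E : Type*} [Fintype σ] [NormedAddCommGroup E]
    [NormedSpace ℂ E] {A : Set (σ → ℂ)} (hAo : IsOpen A) (hAne : A.Nonempty) {G : Set E}
    {f : (σ → ℂ) → E → ℂ} (ha : ∀ a ∈ A, DifferentiableOn ℂ (f a) G) (k : ℕ) :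
    ∃ Q : E → MvPolynomial σ ℂ, (∀ w, (Q w).totalDegree ≤ k) ∧
      (∀ ℓ : MvPolynomial σ ℂ →ₗ[ℂ] ℂ, DifferentiableOn ℂ (fun w => ℓ (Q w)) G) ∧
      ∀ w P, P.totalDegree ≤ k → (∀ z ∈ A, f z w = eval z P) → Q w = P := by
  classical
  obtain ⟨x, hx, hxA⟩ := exists_grid_subset_of_isOpen hAo hAne k
  obtain ⟨L, hLV, hLP⟩ := exists_linearMap_leftInverse_eval_grid
    (V := restrictTotalDegree σ ℂ k)
    (fun P hP i => (degreeOf_le_totalDegree P i).trans ((mem_restrictTotalDegree σ k P).1 hP)) x hx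
  refine ⟨fun w => L fun γ => f (fun i => x i (γ i)) w,
    fun w => (mem_restrictTotalDegree σ k _).1 (hLV _), fun ℓ => ?_, fun w P hP hfP => ?_⟩
  · change DifferentiableOn ℂ
      ((ℓ ∘ₗ L).toContinuousLinearMap ∘ fun w γ => f (fun i => x i (γ i)) w) G
    exact (ℓ ∘ₗ L).toContinuousLinearMap.differentiable.comp_differentiableOn
      (differentiableOn_pi.2 fun γ => ha _ (hxA γ))
  · simp_rw [hfP _ (hxA _)]
    exact hLP P ((mem_restrictTotalDegree σ k P).2 hP)

theorem exists_index_eqOn_of_forall_mem_exists {Z E F : Type*} [NormedAddCommGroup E]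
    [NormedSpace ℂ E] [CompleteSpace E] [NormedAddCommGroup F] [NormedSpace ℂ F] [CompleteSpace F]
    {G U : Set E} (hGo : IsOpen G) (hGc : IsPreconnected G) (hUo : IsOpen U) (hUne : U.Nonempty)
    (hUG : U ⊆ G) {A : Set Z} {f : Z → E → F} (ha : ∀ a ∈ A, DifferentiableOn ℂ (f a) G)
    {g : ℕ → Z → E → F} (hg : ∀ k, ∀ a ∈ A, DifferentiableOn ℂ (g k a) G)
    (hU : ∀ w ∈ U, ∃ k, ∀ a ∈ A, f a w = g k a w) :
    ∃ k, ∀ a ∈ A, EqOn (f a) (g k a) G := by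
  have hS : ∀ k, IsClosed (Subtype.val ⁻¹' {w | ∀ a ∈ A, f a w = g k a w} : Set U) := by
    intro k
    change IsClosed {w : U | ∀ a ∈ A, f a w = g k a w}
    simp only [ofPred_forall]
    exact isClosed_biInter fun a ha' =>
      isClosed_eq ((ha a ha').mono hUG).continuousOn.domRestrict
        ((hg k a ha').mono hUG).continuousOn.domRestrict
  obtain ⟨k, V, hVo, ⟨w, hw⟩, hVU⟩ :=
    hUo.exists_isOpen_subset_of_subset_iUnion hUne hS fun w hw => mem_iUnion.2 (hU w hw)
  exact ⟨k, fun a ha' => (ha a ha').eqOn_of_preconnected_of_eventuallyEq (hg k a ha') hGo hGc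
    (hUG (hVU hw).1) (eventually_of_mem (hVo.mem_nhds hw) fun v hv => (hVU hv).2 a ha')⟩

theorem partial_polynomial_extension_general (m n : ℕ)
    (D : Set (Fin m → ℂ))
    (G : Set (EuclideanSpace ℂ (Fin n))) (hGo : IsOpen G) (hGc : IsConnected G)
    (A : Set (Fin m → ℂ)) (hAo : IsOpen A) (hAne : A.Nonempty) (hAD : A ⊆ D)
    (w₀ : EuclideanSpace ℂ (Fin n)) (ρ : ℝ) (hρ : 0 < ρ)
    (B : Set (EuclideanSpace ℂ (Fin n))) (hB : B = Metric.closedBall w₀ ρ) (hBG : B ⊆ G)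
    (f : (Fin m → ℂ) → EuclideanSpace ℂ (Fin n) → ℂ)
    (ha : ∀ a ∈ A, DifferentiableOn ℂ (f a) G)
    (hb : ∀ b ∈ B, ∃ P : MvPolynomial (Fin m) ℂ, ∀ z ∈ D, f z b = MvPolynomial.eval z P) :
    ∃ k : ℕ, ∃ c : (Fin m → Fin (k + 1)) → EuclideanSpace ℂ (Fin n) → ℂ,
      (∀ α, DifferentiableOn ℂ (c α) G) ∧
      ∀ z w, (z, w) ∈ (A ×ˢ G) ∪ (D ×ˢ B) →
        f z w =
          ∑ α ∈ Finset.univ.filter (fun α : Fin m → Fin (k + 1) => ∑ i, (α i : ℕ) ≤ k),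
            c α w * ∏ i, z i ^ (α i : ℕ) := by
  choose Q hQdeg hQdiff hQeq using exists_totalDegree_le_interpolant hAo hAne ha
  have hball : Metric.ball w₀ ρ ⊆ B := hB ▸ Metric.ball_subset_closedBall
  obtain ⟨K, hK⟩ := exists_index_eqOn_of_forall_mem_exists hGo hGc.isPreconnected
    Metric.isOpen_ball (Metric.nonempty_ball.2 hρ) (hball.trans hBG) ha
    (g := fun k z w => eval z (Q k w)) (fun k z _ => hQdiff k (aeval z).toLinearMap)
    fun w hw => by
      obtain ⟨P, hP⟩ := hb w (hball hw)
      refine ⟨P.totalDegree, fun z hz => ?_⟩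
      rw [hP z (hAD hz), hQeq _ w P le_rfl fun z hz => hP z (hAD hz)]
  have hX : ∀ z w, (z, w) ∈ (A ×ˢ G) ∪ (D ×ˢ B) → f z w = eval z (Q K w) := by
    rintro z w (⟨hz, hw⟩ | ⟨hz, hw⟩)
    · exact hK z hz hw
    · obtain ⟨P, hP⟩ := hb w hw
      have hPQ : P = Q K w := eq_of_eqOn_of_isOpen hAo hAne fun z' hz' => by
        dsimp only
        rw [← hP z' (hAD hz'), hK z' hz' (hBG hw)]
      rw [hP z hz, hPQ]
  refine ⟨K, fun α w => coeff (Finsupp.equivFunOnFinite.symm fun i => (α i : ℕ)) (Q K w),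
    fun α => hQdiff K (lcoeff ℂ _), fun z w hzw => ?_⟩
  rw [hX z w hzw, eval_eq_sum_filter_coeff (hQdeg K w)]

/-- **Theorem 1** (closed-ball case): let `D ⊆ ℂ^m`, `G ⊆ ℂ^n` be domains, `A ⊆ D` a
nonempty open set, `B ⊆ G` a closed (Euclidean) ball, and
`X := (A × G) ∪ (D × B)`. If `f(a,·)` is holomorphic on `G` for every `a ∈ A` and
`f(·,b)` is a polynomial on `D` for every `b ∈ B`, then on `X` the function `f` agrees
with a polynomial in `z` of some total degree `≤ k` whose coefficients are holomorphic
functions of `w` on `G`. -/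
theorem partial_polynomial_extension (m n : ℕ)
    (D : Set (Fin m → ℂ)) (hDo : IsOpen D) (hDc : IsConnected D)
    (G : Set (EuclideanSpace ℂ (Fin n))) (hGo : IsOpen G) (hGc : IsConnected G)
    (A : Set (Fin m → ℂ)) (hAo : IsOpen A) (hAne : A.Nonempty) (hAD : A ⊆ D)
    (w₀ : EuclideanSpace ℂ (Fin n)) (ρ : ℝ) (hρ : 0 < ρ)
    (B : Set (EuclideanSpace ℂ (Fin n))) (hB : B = Metric.closedBall w₀ ρ) (hBG : B ⊆ G)
    (f : (Fin m → ℂ) → EuclideanSpace ℂ (Fin n) → ℂ)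
    (ha : ∀ a ∈ A, DifferentiableOn ℂ (f a) G)
    (hb : ∀ b ∈ B, ∃ P : MvPolynomial (Fin m) ℂ, ∀ z ∈ D, f z b = MvPolynomial.eval z P) :
    ∃ k : ℕ, ∃ c : (Fin m → Fin (k + 1)) → EuclideanSpace ℂ (Fin n) → ℂ,
      (∀ α, DifferentiableOn ℂ (c α) G) ∧
      ∀ z w, (z, w) ∈ (A ×ˢ G) ∪ (D ×ˢ B) →
        f z w =
          ∑ α ∈ Finset.univ.filter (fun α : Fin m → Fin (k + 1) => ∑ i, (α i : ℕ) ≤ k),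
            c α w * ∏ i, z i ^ (α i : ℕ) :=
  partial_polynomial_extension_general m n D G hGo hGc A hAo hAne hAD w₀ ρ hρ B hB hBG f ha hb
end

section
/- Let D ⊆ ℂ be a domain, let G ⊆ ℂ^n be a domain, let A ⊆ D be a nonempty open set, and let B ⊆ G be a closed ball. Set X := (A × G) ∪ (D × B). Let f : ℂ × ℂ^n → ℂ be a function such that: (a) for every a ∈ A, the function w ↦ f(a,w) is holomorphic on G; (b) for every b ∈ B, the function z ↦ f(z,b) is holomorphic on D; (c) for every b ∈ B there are polynomials P_b, Q_b ∈ ℂ[z] with Q_b ≠ 0 and f(z,b)·Q_b(z) = P_b(z) for all z ∈ D. Then there exist an integer r ≥ 0, holomorphic functions b_0, …, b_r : G → ℂ and a_0, …, a_{r−1} : G → ℂ, and a holomorphic function h : G → ℂ not identically zero, such that f(z,w)·(∑_{j=0}^{r} b_j(w) z^j) = ∑_{j=0}^{r−1} a_j(w) z^j for every (z,w) ∈ X, and such that for every w ∈ B with h(w) ≠ 0 the numbers b_0(w), …, b_r(w) are not all zero; in particular, for every such w the function z ↦ f(z,w) is rational. -/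
/-!
For `r ∈ ℕ` and `w ∈ G` consider the matrix with rows indexed by `z ∈ A` and entries
`f z w * z ^ j` (`j ≤ r`) and `z ^ j` (`j < r`). When `f(·, w) = P / Q` with `deg Q ≤ r` and
`deg P < r`, the coefficients of `Q` and `-P` form a common kernel vector, so every maximal
minor vanishes at `w`. By Baire's theorem one `r` works on an open subset of `B`, hence on all of
`G` by the identity theorem. Expanding a nonvanishing minor of maximal size along an extra row
gives holomorphic coefficients of a relation on `A × G`, which the identity theorem in `z`
extends to `D × B`. Where the minor is nonzero the relation is nontrivial, and its denominator
cannot vanish, since a polynomial vanishing on the open set `A` is zero.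
-/

open Set Filter Topology Matrix

section IdentityTheorem

variable {E : Type*} [NormedAddCommGroup E] [NormedSpace ℂ E] {d : E → ℂ}

theorem eqOn_zero_of_convex_of_eventuallyEq_zero {s : Set E} (hs : IsOpen s)
    (hsc : Convex ℝ s) (hd : DifferentiableOn ℂ d s) {y : E} (hy : y ∈ s)
    (hdy : d =ᶠ[𝓝 y] 0) : EqOn d 0 s := by
  intro u hu
  let L : ℂ → E := fun t => y + t • (u - y)
  have hL : Differentiable ℂ L := by fun_prop
  have hT : IsOpen (L ⁻¹' s) := hs.preimage hL.continuous
  have hTc : Convex ℝ (L ⁻¹' s) :=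
    (hsc.translate_preimage_right y).linear_preimage
      ((LinearMap.toSpanSingleton ℂ E (u - y)).restrictScalars ℝ)
  have hdL : DifferentiableOn ℂ (d ∘ L) (L ⁻¹' s) :=
    hd.comp hL.differentiableOn (mapsTo_preimage L s)
  have h0 : d ∘ L =ᶠ[𝓝 0] 0 := (hL.continuous.tendsto' 0 y (by simp [L])).eventually hdy
  simpa [L] using (hdL.analyticOnNhd hT).eqOn_zero_of_preconnected_of_eventuallyEq_zero
    hTc.isPreconnected (by simpa [L] using hy) h0 (x := 1) (by simpa [L] using hu)

theorem eqOn_zero_of_isPreconnected_of_eventuallyEq_zero {G : Set E} (hGo : IsOpen G)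
    (hGc : IsPreconnected G) (hd : DifferentiableOn ℂ d G) {y : E} (hy : y ∈ G)
    (hdy : d =ᶠ[𝓝 y] 0) : EqOn d 0 G := by
  have hGU : G ⊆ {w | d =ᶠ[𝓝 w] 0} := by
    refine hGc.subset_of_closure_inter_subset isOpen_setOfPred_eventually_nhds ⟨y, hy, hdy⟩ ?_
    rintro w ⟨hwU, hwG⟩
    obtain ⟨ε, hε, hball⟩ := Metric.isOpen_iff.1 hGo w hwG
    obtain ⟨v, hv, hvU⟩ := mem_closure_iff.1 hwU _ Metric.isOpen_ball (Metric.mem_ball_self hε)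
    exact eventually_of_mem (Metric.ball_mem_nhds w hε) <|
      eqOn_zero_of_convex_of_eventuallyEq_zero Metric.isOpen_ball (convex_ball w ε)
        (hd.mono hball) hv hvU
  exact fun w hw => (hGU hw).self_of_nhds

end IdentityTheorem

theorem eq_zero_of_sum_mul_pow_eq_zero {R : Type*} [CommRing R] [IsDomain R] {A : Set R}
    (hA : A.Infinite) {m : ℕ} {c : Fin m → R} (h : ∀ z ∈ A, ∑ j, c j * z ^ (j : ℕ) = 0) :
    c = 0 :=
  Matrix.eq_zero_of_forall_index_sum_mul_pow_eq_zero
    (Subtype.val_injective.comp <| (hA.natEmbedding _).injective.comp Fin.val_injective)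
    fun j => h _ (hA.natEmbedding _ j).2

theorem DifferentiableOn.matrix_det {𝕜 E ι : Type*} [NontriviallyNormedField 𝕜]
    [NormedAddCommGroup E] [NormedSpace 𝕜 E] [Fintype ι] [DecidableEq ι]
    {M : E → Matrix ι ι 𝕜} {s : Set E} (hM : ∀ i j, DifferentiableOn 𝕜 (fun w => M w i j) s) :
    DifferentiableOn 𝕜 (fun w => (M w).det) s := by
  simp only [Matrix.det_apply]
  refine DifferentiableOn.fun_sum fun σ _ => DifferentiableOn.const_smul ?_ _
  rw [← Finset.prod_fn]
  exact Finset.prod_induction _ (fun g => DifferentiableOn 𝕜 g s) (fun _ _ => .mul)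
    (differentiableOn_const 1) fun i _ => hM (σ i) i

theorem exists_nonempty_interior_of_subset_iUnion_isClosed {X ι : Type*} [TopologicalSpace X]
    [BaireSpace X] [Countable ι] {s : Set X} (hs : IsOpen s) (hne : s.Nonempty) {F : ι → Set X}
    (hF : ∀ i, IsClosed (F i)) (hsF : s ⊆ ⋃ i, F i) : ∃ i, (interior (F i)).Nonempty := by
  by_contra! h
  exact not_isMeagre_of_isOpen hs hne <|
    (isMeagre_iUnion fun i => ((hF i).isNowhereDense_iff.2 (h i)).isMeagre).mono hsF

theorem IsClosed.inter_iInter_preimage {X Y κ : Type*} [TopologicalSpace X] [TopologicalSpace Y]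
    {B : Set X} (hB : IsClosed B) {g : κ → X → Y} (hg : ∀ i, ContinuousOn (g i) B) {t : Set Y}
    (ht : IsClosed t) : IsClosed (B ∩ ⋂ i, g i ⁻¹' t) := by
  have : B ∩ ⋂ i, g i ⁻¹' t = B ∩ ⋂ i, (B ∩ g i ⁻¹' t) := by
    ext x; simp +contextual
  rw [this]
  exact hB.inter (isClosed_iInter fun i => (hg i).preimage_isClosed_of_isClosed hB ht)

section Laplace

variable {α ι R : Type*} [CommRing R] [DecidableEq ι] {s : ℕ}

def laplaceCoeff (N : Matrix α ι R) (p : Fin s → α) (κ : Fin (s + 1) → ι) (k : ι) : R :=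
  ∑ j, if κ j = k then (-1) ^ (j : ℕ) * (N.submatrix p (κ ∘ j.succAbove)).det else 0

theorem laplaceCoeff_apply_zero {N : Matrix α ι R} {p : Fin s → α} {κ : Fin (s + 1) → ι}
    (hκ : κ.Injective) : laplaceCoeff N p κ (κ 0) = (N.submatrix p (Fin.tail κ)).det := by
  rw [laplaceCoeff, Finset.sum_eq_single 0 (fun j _ hj => if_neg (hκ.ne hj)) (by simp)]
  simp only [if_true, Fin.val_zero, pow_zero, one_mul, Fin.succAbove_zero]
  rfl

theorem mulVec_laplaceCoeff [Fintype ι] (N : Matrix α ι R) (p : Fin s → α)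
    (κ : Fin (s + 1) → ι) :
    N *ᵥ laplaceCoeff N p κ = fun z => (N.submatrix (Fin.cons z p) κ).det := by
  funext z
  simp only [mulVec, dotProduct, laplaceCoeff, Finset.mul_sum, mul_ite, mul_zero]
  rw [Finset.sum_comm, det_succ_row_zero]
  refine Finset.sum_congr rfl fun j _ => ?_
  simp only [Finset.sum_ite_eq, Finset.mem_univ, if_true, submatrix_apply, Fin.cons_zero,
    submatrix_submatrix, Fin.cons_comp_succ]
  ring

def HasNonzeroMinor {β : Type*} (M : β → Matrix α ι R) (G : Set β) (m : ℕ) : Prop :=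
  ∃ (p : Fin m → α) (κ : Fin m → ι), κ.Injective ∧ ∃ w ∈ G, ((M w).submatrix p κ).det ≠ 0

theorem not_hasNonzeroMinor_card {β : Type*} [Fintype ι] {M : β → Matrix α ι R} {G : Set β}
    (hdet : ∀ p : ι → α, ∀ w ∈ G, ((M w).submatrix p id).det = 0) :
    ¬ HasNonzeroMinor M G (Fintype.card ι) := by
  rintro ⟨p, κ, hκ, w, hw, hne⟩
  let e : Fin (Fintype.card ι) ≃ ι :=
    Equiv.ofBijective κ ((Fintype.bijective_iff_injective_and_card κ).2 ⟨hκ, by simp⟩)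
  apply hne
  rw [← hdet (p ∘ e.symm) w hw, ← det_submatrix_equiv_self e]
  congr 1
  ext i j
  simp [e]

theorem DifferentiableOn.laplaceCoeff {𝕜 E : Type*} [NontriviallyNormedField 𝕜]
    [NormedAddCommGroup E] [NormedSpace 𝕜 E] [Fintype ι] {M : E → Matrix α ι 𝕜} {t : Set E}
    (hM : ∀ z k, DifferentiableOn 𝕜 (fun w => M w z k) t) (p : Fin s → α)
    (κ : Fin (s + 1) → ι) (k : ι) : DifferentiableOn 𝕜 (fun w => laplaceCoeff (M w) p κ k) t := by
  refine DifferentiableOn.fun_sum fun j _ => ?_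
  split_ifs
  · exact (DifferentiableOn.matrix_det fun i l => hM _ _).const_mul _
  · exact differentiableOn_const 0

end Laplace

section HolomorphicKernel

variable {E α ι : Type*} [NormedAddCommGroup E] [NormedSpace ℂ E] [Fintype ι] [DecidableEq ι]

theorem exists_differentiableOn_mulVec_eq_zero {M : E → Matrix α ι ℂ} {G : Set E}
    (hG : G.Nonempty) (hM : ∀ z k, DifferentiableOn ℂ (fun w => M w z k) G)
    (hdet : ∀ p : ι → α, ∀ w ∈ G, ((M w).submatrix p id).det = 0) :
    ∃ c : ι → E → ℂ, (∀ k, DifferentiableOn ℂ (c k) G) ∧ (∃ k, ∃ w ∈ G, c k w ≠ 0) ∧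
      ∀ w ∈ G, M w *ᵥ (fun k => c k w) = 0 := by
  classical
  have h0 : HasNonzeroMinor M G 0 := by
    obtain ⟨w, hw⟩ := hG
    exact ⟨finZeroElim, finZeroElim, Function.injective_of_subsingleton _, w, hw, by simp⟩
  set s := Nat.findGreatest (HasNonzeroMinor M G) (Fintype.card ι)
  obtain ⟨p, κ, hκ, w₁, hw₁, hne⟩ : HasNonzeroMinor M G s :=
    Nat.findGreatest_spec (Nat.zero_le _) h0
  have hs : s < Fintype.card ι := (Nat.findGreatest_le _).lt_of_ne fun h =>
    not_hasNonzeroMinor_card hdet (h ▸ Nat.findGreatest_spec (Nat.zero_le _) h0)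
  have hmax : ¬ HasNonzeroMinor M G (s + 1) := Nat.findGreatest_is_greatest (Nat.lt_succ_self s) hs
  obtain ⟨k₀, hk₀⟩ : ∃ k₀, k₀ ∉ range κ := by
    by_contra! h
    exact hs.not_ge (by simpa using Fintype.card_le_of_surjective κ h)
  let κ' : Fin (s + 1) → ι := Fin.cons k₀ κ
  have hκ' : κ'.Injective := Fin.cons_injective_of_injective hk₀ hκ
  refine ⟨fun k w => laplaceCoeff (M w) p κ' k, DifferentiableOn.laplaceCoeff hM p κ',
    ⟨κ' 0, w₁, hw₁, ?_⟩, fun w hw => ?_⟩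
  · exact (laplaceCoeff_apply_zero hκ').trans_ne hne
  · refine (mulVec_laplaceCoeff (M w) p κ').trans (funext fun z => ?_)
    by_contra h
    exact hmax ⟨Fin.cons z p, _, hκ', w, hw, h⟩

end HolomorphicKernel

section CrossMatrix

open Polynomial

variable {R W : Type*} [CommRing R]

def crossMatrix (f : R → W → R) (r : ℕ) (A : Set R) (w : W) :
    Matrix A (Fin (r + 1) ⊕ Fin r) R :=
  Matrix.of fun z => Sum.elim (fun j => f z w * (z : R) ^ (j : ℕ)) fun j => (z : R) ^ (j : ℕ)

theorem crossMatrix_mulVec (f : R → W → R) (r : ℕ) (A : Set R) (w : W)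
    (v : Fin (r + 1) ⊕ Fin r → R) (z : A) :
    (crossMatrix f r A w *ᵥ v) z =
      f z w * ∑ j, v (.inl j) * (z : R) ^ (j : ℕ) + ∑ j, v (.inr j) * (z : R) ^ (j : ℕ) := by
  simp only [crossMatrix, mulVec, dotProduct, Fintype.sum_sum_type, of_apply, Sum.elim_inl,
    Sum.elim_inr, Finset.mul_sum]
  ring_nf

theorem Polynomial.eval_eq_sum_fin {p : R[X]} {m : ℕ} (hp : p.natDegree < m) (x : R) :
    p.eval x = ∑ j : Fin m, p.coeff j * x ^ (j : ℕ) :=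
  (eval_eq_sum_range' hp x).trans (Fin.sum_univ_eq_sum_range (fun j => p.coeff j * x ^ j) m).symm

theorem det_crossMatrix_eq_zero {K : Type*} [Field K] {f : K → W → K} {r : ℕ} {A : Set K}
    {w : W} {P Q : K[X]} (hQ : Q ≠ 0) (hQr : Q.natDegree ≤ r) (hPr : P.natDegree < r)
    (hPQ : ∀ z ∈ A, f z w * Q.eval z = P.eval z) (p : Fin (r + 1) ⊕ Fin r → A) :
    ((crossMatrix f r A w).submatrix p id).det = 0 := by
  classical
  refine Matrix.exists_mulVec_eq_zero_iff.1
    ⟨Sum.elim (fun j => Q.coeff j) (fun j => -P.coeff j), fun h => hQ ?_, funext fun i => ?_⟩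
  · simpa using congrFun h (.inl ⟨Q.natDegree, Nat.lt_succ_of_le hQr⟩)
  · have := crossMatrix_mulVec f r A w (Sum.elim (fun j => Q.coeff j) (fun j => -P.coeff j)) (p i)
    simp only [Sum.elim_inl, Sum.elim_inr, neg_mul, Finset.sum_neg_distrib,
      ← eval_eq_sum_fin (Nat.lt_succ_of_le hQr), ← eval_eq_sum_fin hPr, hPQ _ (p i).2,
      add_neg_cancel] at this
    exact this

end CrossMatrix

section CrossMatrixHolomorphic

open Polynomial

variable {E : Type*} [NormedAddCommGroup E] [NormedSpace ℂ E] {f : ℂ → E → ℂ} {A : Set ℂ}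
  {G : Set E}

theorem differentiableOn_crossMatrix_apply (ha : ∀ a ∈ A, DifferentiableOn ℂ (f a) G) (r : ℕ)
    (z : A) (k : Fin (r + 1) ⊕ Fin r) :
    DifferentiableOn ℂ (fun w => crossMatrix f r A w z k) G := by
  rcases k with j | j
  · exact (ha z z.2).mul_const _
  · exact differentiableOn_const _

theorem exists_forall_det_crossMatrix_eq_zero [CompleteSpace E] {B : Set E} (hGo : IsOpen G)
    (hGc : IsPreconnected G) (hBc : IsClosed B) (hBi : (interior B).Nonempty) (hBG : B ⊆ G)
    (ha : ∀ a ∈ A, DifferentiableOn ℂ (f a) G)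
    (hrat : ∀ b ∈ B, ∃ P Q : ℂ[X], Q ≠ 0 ∧ ∀ z ∈ A, f z b * Q.eval z = P.eval z) :
    ∃ r, ∀ p : Fin (r + 1) ⊕ Fin r → A, ∀ w ∈ G,
      ((crossMatrix f r A w).submatrix p id).det = 0 := by
  have hdiff : ∀ r (p : Fin (r + 1) ⊕ Fin r → A),
      DifferentiableOn ℂ (fun w => ((crossMatrix f r A w).submatrix p id).det) G :=
    fun r p => DifferentiableOn.matrix_det fun i k => differentiableOn_crossMatrix_apply ha r _ _
  let F : ℕ → Set E := fun r =>
    B ∩ ⋂ p : Fin (r + 1) ⊕ Fin r → A, (fun w => ((crossMatrix f r A w).submatrix p id).det) ⁻¹' {0}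
  have hF : ∀ r, IsClosed (F r) := fun r =>
    hBc.inter_iInter_preimage (fun p => ((hdiff r p).continuousOn).mono hBG) isClosed_singleton
  have hcover : interior B ⊆ ⋃ r, F r := by
    intro w hw
    obtain ⟨P, Q, hQ, hPQ⟩ := hrat w (interior_subset hw)
    refine mem_iUnion.2 ⟨max Q.natDegree (P.natDegree + 1), interior_subset hw, ?_⟩
    exact mem_iInter.2 fun p =>
      det_crossMatrix_eq_zero hQ (le_max_left _ _) (Nat.lt_of_succ_le (le_max_right _ _)) hPQ p
  obtain ⟨r, y, hy⟩ :=
    exists_nonempty_interior_of_subset_iUnion_isClosed isOpen_interior hBi hF hcover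
  refine ⟨r, fun p => eqOn_zero_of_isPreconnected_of_eventuallyEq_zero hGo hGc (hdiff r p)
    (hBG (interior_subset hy).1) ?_⟩
  filter_upwards [isOpen_interior.mem_nhds hy] with w hw
  exact mem_iInter.1 (interior_subset hw).2 p

end CrossMatrixHolomorphic

/-- **Theorem 2**, one-variable case: let `D ⊆ ℂ`, `G ⊆ ℂ^n` be domains, `A ⊆ D` nonempty
open, `B ⊆ G` a closed (Euclidean) ball, and `X := (A × G) ∪ (D × B)`. If `f` is
separately holomorphic on `X` and for each `b ∈ B` the function `f(·,b)` is rational on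
`D` (equal to `P_b/Q_b` with `Q_b ≠ 0`), then there are holomorphic coefficient functions
`b 0, …, b r` and `a 0, …, a (r−1)` on `G` and a holomorphic `h` not identically zero on
`G` with `f(z,w)·∑ b j (w) z^j = ∑ a j (w) z^j` on `X`, and for every `w ∈ B` with
`h w ≠ 0` the `b j (w)` are not all zero; in particular `f(·,w)` is rational for such `w`. -/
theorem rational_cross_one_variable (n : ℕ)
    (D : Set ℂ) (hDo : IsOpen D) (hDc : IsConnected D)
    (G : Set (EuclideanSpace ℂ (Fin n))) (hGo : IsOpen G) (hGc : IsConnected G)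
    (A : Set ℂ) (hAo : IsOpen A) (hAne : A.Nonempty) (hAD : A ⊆ D)
    (w₀ : EuclideanSpace ℂ (Fin n)) (ρ : ℝ) (hρ : 0 < ρ)
    (B : Set (EuclideanSpace ℂ (Fin n))) (hB : B = Metric.closedBall w₀ ρ) (hBG : B ⊆ G)
    (f : ℂ → EuclideanSpace ℂ (Fin n) → ℂ)
    (ha : ∀ a ∈ A, DifferentiableOn ℂ (f a) G)
    (hb : ∀ b ∈ B, DifferentiableOn ℂ (fun z => f z b) D)
    (hrat : ∀ b ∈ B, ∃ P Q : Polynomial ℂ, Q ≠ 0 ∧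
      ∀ z ∈ D, f z b * Q.eval z = P.eval z) :
    ∃ r : ℕ, ∃ b : Fin (r + 1) → EuclideanSpace ℂ (Fin n) → ℂ,
      ∃ a : Fin r → EuclideanSpace ℂ (Fin n) → ℂ, ∃ h : EuclideanSpace ℂ (Fin n) → ℂ,
      (∀ j, DifferentiableOn ℂ (b j) G) ∧
      (∀ j, DifferentiableOn ℂ (a j) G) ∧
      DifferentiableOn ℂ h G ∧ (∃ w ∈ G, h w ≠ 0) ∧
      (∀ z w, (z, w) ∈ (A ×ˢ G) ∪ (D ×ˢ B) →
        f z w * (∑ j : Fin (r + 1), b j w * z ^ (j : ℕ)) =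
          ∑ j : Fin r, a j w * z ^ (j : ℕ)) ∧
      (∀ w ∈ B, h w ≠ 0 →
        (∃ j, b j w ≠ 0) ∧
        ∃ p q : Polynomial ℂ, q ≠ 0 ∧ ∀ z ∈ D, f z w * q.eval z = p.eval z) := by
  obtain ⟨z₀, hz₀⟩ := hAne
  have hBi : (interior B).Nonempty :=
    ⟨w₀, hB ▸ mem_interior_iff_mem_nhds.2 (Metric.closedBall_mem_nhds w₀ hρ)⟩
  obtain ⟨r, hdet⟩ := exists_forall_det_crossMatrix_eq_zero hGo hGc.isPreconnected
    (hB ▸ Metric.isClosed_closedBall) hBi hBG ha fun b hb' => by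
      obtain ⟨P, Q, hQ, hPQ⟩ := hrat b hb'
      exact ⟨P, Q, hQ, fun z hz => hPQ z (hAD hz)⟩
  obtain ⟨c, hc, ⟨k₀, w₁, hw₁, hk₀⟩, hker⟩ := exists_differentiableOn_mulVec_eq_zero hGc.nonempty
    (differentiableOn_crossMatrix_apply ha r) hdet
  set b : Fin (r + 1) → _ := fun j => c (.inl j)
  set a : Fin r → _ := fun j => -c (.inr j)
  have hAG : ∀ z ∈ A, ∀ w ∈ G,
      f z w * ∑ j, b j w * z ^ (j : ℕ) - ∑ j, a j w * z ^ (j : ℕ) = 0 := fun z hz w hw => by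
    simpa [b, a, crossMatrix_mulVec] using congrFun (hker w hw) ⟨z, hz⟩
  have hDB : ∀ w ∈ B, ∀ z ∈ D,
      f z w * ∑ j, b j w * z ^ (j : ℕ) - ∑ j, a j w * z ^ (j : ℕ) = 0 := fun w hw => by
    refine eqOn_zero_of_isPreconnected_of_eventuallyEq_zero hDo hDc.isPreconnected
      (by fun_prop) (hAD hz₀) ?_
    filter_upwards [hAo.mem_nhds hz₀] with z hz using hAG z hz w (hBG hw)
  refine ⟨r, b, a, c k₀, fun j => hc _, fun j => (hc _).neg, hc k₀, ⟨w₁, hw₁, hk₀⟩, ?_,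
    fun w hw hk => ⟨?_, hrat w hw⟩⟩
  · rintro z w (⟨hz, hw⟩ | ⟨hz, hw⟩)
    exacts [sub_eq_zero.1 (hAG z hz w hw), sub_eq_zero.1 (hDB w hw z hz)]
  · by_contra! hb0
    have ha0 : (fun j => a j w) = 0 :=
      eq_zero_of_sum_mul_pow_eq_zero (infinite_of_mem_nhds z₀ (hAo.mem_nhds hz₀)) fun z hz => by
        simpa [hb0] using hAG z hz w (hBG hw)
    rcases k₀ with j | j
    exacts [hk (hb0 j), hk (neg_eq_zero.1 (congrFun ha0 j))]
end

section
/- Let Ω ⊆ ℂ^n be a domain and let F : ℂ^m × Ω → ℂ be holomorphic (on the open subset ℂ^m × Ω of ℂ^{m+n}). Suppose there exist an integer k₀ ≥ 0 and a nonempty open set U ⊆ Ω such that for every w ∈ U the function z ↦ F(z,w) is a polynomial of total degree at most k₀, i.e. F(z,w) = ∑_{|α| ≤ k₀} a_α(w) z^α for some complex numbers a_α(w). Then there exist holomorphic functions c_α : Ω → ℂ, one for each multi-index α ∈ ℕ^m with |α| ≤ k₀, such that F(z,w) = ∑_{|α| ≤ k₀} c_α(w)·z^α for every (z,w) ∈ ℂ^m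 × Ω. -/
/-!
Since monomials are linearly independent functions on `ℂ^m`, their restrictions to some finite
set `t ⊆ ℂ^m` already are, so the coefficients of a polynomial in `z` are a fixed linear function
of its values on `t`. Applying that linear function to `(F(x, w))_{x ∈ t}` defines coefficients
`c_α(w)` that are holomorphic on `Ω` and are the right ones for `w ∈ U`. For each `z`, the function
`w ↦ F(z, w) - ∑ c_α(w) z^α` is then holomorphic on `Ω` and vanishes on `U`, hence on `Ω` by the
identity theorem, which in several variables follows from the one-variable one by restricting
to complex lines.
-/

open Set Filter Topology

section IdentityTheorem

variable {E F : Type*} [NormedAddCommGroup E] [NormedSpace ℂ E]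
  [NormedAddCommGroup F] [NormedSpace ℂ F] [CompleteSpace F]

theorem DifferentiableOn.eqOn_zero_of_convex_of_eventuallyEq_zero {f : E → F} {s : Set E}
    (hf : DifferentiableOn ℂ f s) (hs : IsOpen s) (hs' : Convex ℝ s) {z₀ : E} (h₀ : z₀ ∈ s)
    (hfz₀ : f =ᶠ[𝓝 z₀] 0) : EqOn f 0 s := by
  intro z hz
  set line : ℂ → E := fun t => z₀ + t • (z - z₀)
  have hline : Differentiable ℂ line := (differentiable_id.smul_const _).const_add _
  have hD : Convex ℝ (line ⁻¹' s) :=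
    (hs'.translate_preimage_right z₀).linear_preimage
      ((LinearMap.toSpanSingleton ℂ E (z - z₀)).restrictScalars ℝ)
  have hg : AnalyticOnNhd ℂ (f ∘ line) (line ⁻¹' s) :=
    (hf.comp hline.differentiableOn (mapsTo_preimage _ _)).analyticOnNhd
      (hs.preimage hline.continuous)
  have hg₀ : f ∘ line =ᶠ[𝓝 0] 0 := by
    have : Tendsto line (𝓝 0) (𝓝 z₀) := by simpa [line] using hline.continuous.tendsto 0
    exact this.eventually hfz₀
  simpa [line] using hg.eqOn_zero_of_preconnected_of_eventuallyEq_zero hD.isPreconnected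
    (by simpa [line] using h₀) hg₀ (show (1 : ℂ) ∈ line ⁻¹' s by simpa [line] using hz)

theorem DifferentiableOn.eqOn_zero_of_preconnected_of_eventuallyEq_zero {f : E → F} {U : Set E}
    (hf : DifferentiableOn ℂ f U) (hU : IsOpen U) (hU' : IsPreconnected U) {z₀ : E}
    (h₀ : z₀ ∈ U) (hfz₀ : f =ᶠ[𝓝 z₀] 0) : EqOn f 0 U := by
  have hsub : U ⊆ {z | f =ᶠ[𝓝 z] 0} := by
    refine hU'.subset_of_closure_inter_subset isOpen_setOfPred_eventually_nhds ⟨z₀, h₀, hfz₀⟩ ?_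
    rintro z ⟨hz, hzU⟩
    obtain ⟨r, hr, hball⟩ := Metric.isOpen_iff.1 hU z hzU
    obtain ⟨y, hyz, hy⟩ := mem_closure_iff_nhds.1 hz _ (Metric.ball_mem_nhds z hr)
    exact eventually_of_mem (Metric.ball_mem_nhds z hr)
      ((hf.mono hball).eqOn_zero_of_convex_of_eventuallyEq_zero Metric.isOpen_ball
        (convex_ball z r) hyz hy)
  exact fun z hz => (hsub hz).self_of_nhds

end IdentityTheorem

theorem MvPolynomial.linearIndependent_monomial_eval {σ K : Type*} [Fintype σ] [Field K]
    [Infinite K] : LinearIndependent K (fun (d : σ →₀ ℕ) (x : σ → K) => ∏ i, x i ^ d i) := by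
  let evalMap : MvPolynomial σ K →ₗ[K] (σ → K) → K :=
    LinearMap.pi fun x => (MvPolynomial.aeval x).toLinearMap
  have hker : LinearMap.ker evalMap = ⊥ :=
    LinearMap.ker_eq_bot.2 fun p q hpq => MvPolynomial.funext fun x => congrFun hpq x
  have hmono : (fun (d : σ →₀ ℕ) (x : σ → K) => ∏ i, x i ^ d i) =
      evalMap ∘ MvPolynomial.basisMonomials σ K := by
    funext d x
    simp [evalMap, MvPolynomial.eval_monomial, Finsupp.prod_fintype]
  rw [hmono]
  exact (MvPolynomial.basisMonomials σ K).linearIndependent.map' evalMap hker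

theorem linearIndependent_prod_pow_fin (K : Type*) [Field K] [Infinite K] (m k : ℕ) :
    LinearIndependent K
      (fun (α : Fin m → Fin (k + 1)) (z : Fin m → K) => ∏ i, z i ^ (α i : ℕ)) := by
  have hinj : Function.Injective fun α : Fin m → Fin (k + 1) =>
      Finsupp.equivFunOnFinite.symm fun i => (α i : ℕ) := by
    intro α β h
    funext i
    exact Fin.val_injective (by simpa using DFunLike.congr_fun h i)
  convert (MvPolynomial.linearIndependent_monomial_eval (σ := Fin m) (K := K)).comp _ hinj using 1
  funext α z
  simp

/-- The kernels of the restrictions to finite sets form a family of subspaces of a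
finite-dimensional space, so finitely many of them already have the same intersection,
the kernel of `Fintype.linearCombination K v`. -/
theorem LinearIndependent.exists_finset_linearIndependent_restrict {ι X K : Type*} [Fintype ι]
    [Field K] {v : ι → X → K} (hv : LinearIndependent K v) :
    ∃ t : Finset X, LinearIndependent K (fun i (x : t) => v i x) := by
  let kerAt : X → Submodule K (ι → K) := fun x =>
    LinearMap.ker ((LinearMap.proj x).comp (Fintype.linearCombination K v))
  obtain ⟨t, ht⟩ := Finset.exists_inf_eq_iInf kerAt
  refine ⟨t, Fintype.linearIndependent_iff.2 fun g hg => ?_⟩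
  have hg' : g ∈ ⨅ x, kerAt x := by
    rw [← ht, Submodule.mem_finsetInf]
    intro x hx
    simpa [kerAt, Fintype.linearCombination_apply] using congrFun hg ⟨x, hx⟩
  refine Fintype.linearIndependent_iff.1 hv g (funext fun x => ?_)
  simpa [kerAt, Fintype.linearCombination_apply] using (Submodule.mem_iInf _).1 hg' x

theorem LinearIndependent.exists_finset_linearMap_restrict_eq {ι X K : Type*} [Fintype ι]
    [Field K] {v : ι → X → K} (hv : LinearIndependent K v) :
    ∃ (t : Finset X) (P : (t → K) →ₗ[K] ι → K),
      ∀ a : ι → K, P (fun x => ∑ i, a i * v i x) = a := by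
  obtain ⟨t, ht⟩ := hv.exists_finset_linearIndependent_restrict
  obtain ⟨P, hP⟩ := LinearMap.exists_leftInverse_of_injective _
    (LinearMap.ker_eq_bot.2 ht.fintypeLinearCombination_injective)
  refine ⟨t, P, fun a => ?_⟩
  have hvalues : (fun x : t => ∑ i, a i * v i x) =
      Fintype.linearCombination K (fun i (x : t) => v i x) a := by
    ext x
    simp [Fintype.linearCombination_apply]
  rw [hvalues, ← LinearMap.comp_apply, hP, LinearMap.id_apply]

theorem exists_differentiableOn_coeffs_of_linearIndepOn {ι X E : Type*} [NormedAddCommGroup E]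
    [NormedSpace ℂ E] {v : ι → X → ℂ} {S : Finset ι} (hv : LinearIndepOn ℂ v S)
    {F : X → E → ℂ} {Ω U : Set E} (hΩo : IsOpen Ω) (hΩc : IsPreconnected Ω)
    (hF : ∀ z, DifferentiableOn ℂ (F z) Ω) (hUo : IsOpen U) (hUne : U.Nonempty) (hUΩ : U ⊆ Ω)
    (hFU : ∀ w ∈ U, ∃ a : ι → ℂ, ∀ z, F z w = ∑ i ∈ S, a i * v i z) :
    ∃ c : ι → E → ℂ, (∀ i, DifferentiableOn ℂ (c i) Ω) ∧
      ∀ z, ∀ w ∈ Ω, F z w = ∑ i ∈ S, c i w * v i z := by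
  classical
  obtain ⟨t, P, hP⟩ := hv.exists_finset_linearMap_restrict_eq
  let c : ι → E → ℂ := fun i w => if h : i ∈ S then P (fun x : t => F x w) ⟨i, h⟩ else 0
  have hc (i : ι) : DifferentiableOn ℂ (c i) Ω := by
    by_cases h : i ∈ S
    · simp only [c, dif_pos h]
      exact ((LinearMap.proj (⟨i, h⟩ : (S : Set ι))).comp P).toContinuousLinearMap.differentiable
        |>.comp_differentiableOn (differentiableOn_pi.2 fun x => hF x)
    · simp [c, h, differentiableOn_const]
  have hcU : ∀ w ∈ U, ∀ z, F z w = ∑ i ∈ S, c i w * v i z := by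
    intro w hw
    obtain ⟨a, ha⟩ := hFU w hw
    have hca : ∀ i ∈ S, c i w = a i := fun i h => by
      simpa [c, h, ha, ← Finset.sum_coe_sort S] using congrFun (hP fun j => a j) ⟨i, h⟩
    intro z
    rw [ha z]
    exact Finset.sum_congr rfl fun i h => by rw [hca i h]
  refine ⟨c, hc, fun z w hw => sub_eq_zero.1 ?_⟩
  obtain ⟨u₀, hu₀⟩ := hUne
  refine DifferentiableOn.eqOn_zero_of_preconnected_of_eventuallyEq_zero
    (f := fun w => F z w - ∑ i ∈ S, c i w * v i z)
    ((hF z).sub (DifferentiableOn.fun_sum fun i _ => (hc i).mul_const _)) hΩo hΩc (hUΩ hu₀) ?_ hw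
  filter_upwards [hUo.mem_nhds hu₀] with w hw
  simp [hcU w hw z]

/-- If `F` is holomorphic on `ℂ^m × Ω` (with `Ω ⊆ ℂ^n` a domain) and for every `w` in
some nonempty open `U ⊆ Ω` the function `z ↦ F(z,w)` is a polynomial of total degree at
most `k₀`, then `F(z,w) = ∑_{|α| ≤ k₀} c_α(w) z^α` on all of `ℂ^m × Ω` with coefficients
`c_α` holomorphic on `Ω`. -/
theorem polynomial_in_first_variable (m n : ℕ)
    (Ω : Set (Fin n → ℂ)) (hΩo : IsOpen Ω) (hΩc : IsConnected Ω)
    (F : (Fin m → ℂ) × (Fin n → ℂ) → ℂ)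
    (hF : DifferentiableOn ℂ F ((Set.univ : Set (Fin m → ℂ)) ×ˢ Ω))
    (k₀ : ℕ) (U : Set (Fin n → ℂ)) (hUo : IsOpen U) (hUne : U.Nonempty) (hUΩ : U ⊆ Ω)
    (hpoly : ∀ w ∈ U, ∃ a : (Fin m → Fin (k₀ + 1)) → ℂ, ∀ z : Fin m → ℂ,
      F (z, w) =
        ∑ α ∈ Finset.univ.filter (fun α : Fin m → Fin (k₀ + 1) => ∑ i, (α i : ℕ) ≤ k₀),
          a α * ∏ i, z i ^ (α i : ℕ)) :
    ∃ c : (Fin m → Fin (k₀ + 1)) → (Fin n → ℂ) → ℂ,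
      (∀ α, DifferentiableOn ℂ (c α) Ω) ∧
      ∀ z : Fin m → ℂ, ∀ w ∈ Ω,
        F (z, w) =
          ∑ α ∈ Finset.univ.filter (fun α : Fin m → Fin (k₀ + 1) => ∑ i, (α i : ℕ) ≤ k₀),
            c α w * ∏ i, z i ^ (α i : ℕ) := by
  have hslice (z : Fin m → ℂ) : DifferentiableOn ℂ (fun w => F (z, w)) Ω :=
    hF.comp (differentiableOn_const z |>.prodMk differentiableOn_id) fun _ hw => ⟨trivial, hw⟩
  exact exists_differentiableOn_coeffs_of_linearIndepOn
    ((linearIndependent_prod_pow_fin ℂ m k₀).linearIndepOn _) hΩo hΩc.isPreconnected hslice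
    hUo hUne hUΩ hpoly
end

section
/- Let D ⊆ ℂ^m and G ⊆ ℂ^n be domains, let F : D × G → ℂ be holomorphic (on the open subset D × G of ℂ^{m+n}), and let B ⊆ G be a closed ball. Define B' := {w ∈ B : there exists z ∈ D with F(z,w) ≠ 0}. Then B' is open in the subspace topology of B, and either B' is empty or B' is dense in B. -/
open Set Filter Topology

theorem ContinuousOn.isOpen_setOf_exists_apply_ne {X Y Z : Type*} [TopologicalSpace X]
    [TopologicalSpace Y] [TopologicalSpace Z] [T1Space Z] {F : X × Y → Z} {D : Set X}
    {G : Set Y} (hF : ContinuousOn F (D ×ˢ G)) (hG : IsOpen G) (c : Z) :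
    IsOpen {w ∈ G | ∃ z ∈ D, F (z, w) ≠ c} := by
  have hunion : {w ∈ G | ∃ z ∈ D, F (z, w) ≠ c} = ⋃ z ∈ D, G ∩ (fun w ↦ F (z, w)) ⁻¹' {c}ᶜ := by
    ext w
    simp only [mem_ofPred_eq, mem_iUnion, mem_inter_iff, mem_preimage, mem_compl_singleton_iff,
      exists_prop]
    exact ⟨fun ⟨hw, z, hz, hne⟩ ↦ ⟨z, hz, hw, hne⟩, fun ⟨z, hz, hw, hne⟩ ↦ ⟨hw, z, hz, hne⟩⟩
  rw [hunion]
  refine isOpen_biUnion fun z hz ↦ ?_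
  have hslice : ContinuousOn (fun w ↦ F (z, w)) G :=
    hF.comp (continuous_const.prodMk continuous_id).continuousOn fun w hw ↦ ⟨hz, hw⟩
  exact hslice.isOpen_inter_preimage hG isOpen_compl_singleton

section Density

variable {E F : Type*} [NormedAddCommGroup E] [NormedSpace ℂ E]
  [NormedAddCommGroup F] [NormedSpace ℂ F] [CompleteSpace F]

theorem DifferentiableOn.eventually_ne_zero_of_isPreconnected {g : ℂ → F} {S T : Set ℂ}
    (hg : DifferentiableOn ℂ g S) (hS : IsOpen S) (hT : IsPreconnected T) (hTS : T ⊆ S)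
    {a b : ℂ} (ha : a ∈ T) (hb : b ∈ T) (hgb : g b ≠ 0) : ∀ᶠ t in 𝓝[≠] a, g t ≠ 0 := by
  set U := connectedComponentIn S a
  have hTU : T ⊆ U := hT.subset_connectedComponentIn ha hTS
  have hana : AnalyticOnNhd ℂ g U :=
    (hg.mono (connectedComponentIn_subset S a)).analyticOnNhd hS.connectedComponentIn
  refine not_frequently.1 fun hfreq ↦ hgb ?_
  exact hana.eqOn_zero_of_preconnected_of_frequently_eq_zero isPreconnected_connectedComponentIn
    (hTU ha) hfreq (hTU hb)

theorem tendsto_ofReal_nhdsGT_nhdsNE : Tendsto ((↑) : ℝ → ℂ) (𝓝[>] 0) (𝓝[≠] 0) := by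
  refine tendsto_nhdsWithin_iff.2 ⟨?_, ?_⟩
  · exact (Complex.continuous_ofReal.tendsto' 0 0 Complex.ofReal_zero).mono_left
      nhdsWithin_le_nhds
  · filter_upwards [self_mem_nhdsWithin] with t (ht : 0 < t)
    exact Complex.ofReal_ne_zero.2 ht.ne'

/- The complex line through `w` and `w₁` meets the open set around the real segment `[w, w₁]`
in an open set of `ℂ` containing `[0, 1]`, on which `f` restricts to a holomorphic function of
one variable; its zeros cannot accumulate at `0` since it does not vanish at `1`. -/
theorem Convex.subset_closure_setOf_ne_zero {B S : Set E} (hB : Convex ℝ B) (hS : IsOpen S)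
    (hBS : B ⊆ S) {f : E → F} (hf : DifferentiableOn ℂ f S) {w₁ : E} (hw₁ : w₁ ∈ B)
    (hfw₁ : f w₁ ≠ 0) : B ⊆ closure {w ∈ B | f w ≠ 0} := by
  intro w hw
  set ℓ : ℂ → E := fun t ↦ w + t • (w₁ - w)
  have hℓ : Continuous ℓ := by fun_prop
  have hℓ_mem : ∀ t ∈ Icc (0 : ℝ) 1, ℓ t ∈ B := fun t ht ↦ by
    simpa only [ℓ, Complex.coe_smul] using hB.add_smul_sub_mem hw hw₁ ht
  have hℓ_one : ℓ 1 = w₁ := by simp [ℓ]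
  have hev : ∀ᶠ t in 𝓝[≠] (0 : ℂ), f (ℓ t) ≠ 0 := by
    refine DifferentiableOn.eventually_ne_zero_of_isPreconnected (S := ℓ ⁻¹' S)
      (T := (↑) '' Icc (0 : ℝ) 1) ?_ (hS.preimage hℓ)
      (isPreconnected_Icc.image _ Complex.continuous_ofReal.continuousOn) ?_
      ⟨0, left_mem_Icc.2 zero_le_one, Complex.ofReal_zero⟩
      ⟨1, right_mem_Icc.2 zero_le_one, Complex.ofReal_one⟩ (by rwa [hℓ_one])
    · exact hf.comp (by fun_prop) (mapsTo_preimage ℓ S)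
    · rintro _ ⟨t, ht, rfl⟩
      exact hBS (hℓ_mem t ht)
  have hlim : Tendsto (fun t : ℝ ↦ ℓ t) (𝓝[>] 0) (𝓝 w) := by
    have hℓ_zero : ℓ ((0 : ℝ) : ℂ) = w := by simp [ℓ]
    exact hℓ_zero ▸ ((hℓ.comp Complex.continuous_ofReal).tendsto 0).mono_left nhdsWithin_le_nhds
  refine mem_closure_of_tendsto hlim ?_
  filter_upwards [tendsto_ofReal_nhdsGT_nhdsNE.eventually hev, Ioc_mem_nhdsGT zero_lt_one]
    with t hft ht
  exact ⟨hℓ_mem t (Ioc_subset_Icc_self ht), hft⟩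

end Density

theorem not_identically_zero_set_open_dense_general (m n : ℕ)
    (D : Set (Fin m → ℂ))
    (G : Set (EuclideanSpace ℂ (Fin n))) (hGo : IsOpen G)
    (F : (Fin m → ℂ) × EuclideanSpace ℂ (Fin n) → ℂ)
    (hF : DifferentiableOn ℂ F (D ×ˢ G))
    (w₀ : EuclideanSpace ℂ (Fin n)) (ρ : ℝ)
    (B : Set (EuclideanSpace ℂ (Fin n))) (hB : B = Metric.closedBall w₀ ρ) (hBG : B ⊆ G) :
    (∃ U, IsOpen U ∧ {w ∈ B | ∃ z ∈ D, F (z, w) ≠ 0} = B ∩ U) ∧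
      ({w ∈ B | ∃ z ∈ D, F (z, w) ≠ 0} = ∅ ∨
        B ⊆ closure {w ∈ B | ∃ z ∈ D, F (z, w) ≠ 0}) := by
  refine ⟨⟨_, hF.continuousOn.isOpen_setOf_exists_apply_ne hGo 0, ?_⟩, ?_⟩
  · ext w
    exact ⟨fun ⟨hw, hne⟩ ↦ ⟨hw, hBG hw, hne⟩, fun ⟨hw, _, hne⟩ ↦ ⟨hw, hne⟩⟩
  rcases eq_empty_or_nonempty {w ∈ B | ∃ z ∈ D, F (z, w) ≠ 0} with
    hempty | ⟨w₁, hw₁, z₁, hz₁, hFw₁⟩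
  · exact Or.inl hempty
  have hslice : DifferentiableOn ℂ (fun w ↦ F (z₁, w)) G :=
    hF.comp (by fun_prop) fun w hw ↦ ⟨hz₁, hw⟩
  have hB_convex : Convex ℝ B := hB ▸ convex_closedBall w₀ ρ
  refine Or.inr ((hB_convex.subset_closure_setOf_ne_zero hGo hBG hslice hw₁ hFw₁).trans ?_)
  exact closure_mono fun w ⟨hw, hne⟩ ↦ ⟨hw, z₁, hz₁, hne⟩

/-- Let `F` be holomorphic on `D × G` and `B ⊆ G` a closed (Euclidean) ball. Then
`B' := {w ∈ B : F(·,w) ≢ 0 on D}` is open in the subspace topology of `B`, and either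
`B'` is empty or `B'` is dense in `B`. -/
theorem not_identically_zero_set_open_dense (m n : ℕ)
    (D : Set (Fin m → ℂ)) (hDo : IsOpen D) (hDc : IsConnected D)
    (G : Set (EuclideanSpace ℂ (Fin n))) (hGo : IsOpen G) (hGc : IsConnected G)
    (F : (Fin m → ℂ) × EuclideanSpace ℂ (Fin n) → ℂ)
    (hF : DifferentiableOn ℂ F (D ×ˢ G))
    (w₀ : EuclideanSpace ℂ (Fin n)) (ρ : ℝ) (hρ : 0 < ρ)
    (B : Set (EuclideanSpace ℂ (Fin n))) (hB : B = Metric.closedBall w₀ ρ) (hBG : B ⊆ G) :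
    (∃ U, IsOpen U ∧ {w ∈ B | ∃ z ∈ D, F (z, w) ≠ 0} = B ∩ U) ∧
      ({w ∈ B | ∃ z ∈ D, F (z, w) ≠ 0} = ∅ ∨
        B ⊆ closure {w ∈ B | ∃ z ∈ D, F (z, w) ≠ 0}) :=
  not_identically_zero_set_open_dense_general m n D G hGo F hF w₀ ρ B hB hBG
end
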